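/- arXiv:1307.3806 — 7 statements merged into one kernel-verified Lean document; each statement's English description precedes it below -/
import Mathlib

section
/- Let f, fₙ : ℝ → ℝ be convex functions with fₙ → f pointwise, and suppose f is not monotonic. Then inf_{ℝ} fₙ → inf_{ℝ} f. -/
open Filter Set

/-- A convex function is nondecreasing to the right of a point where it has increased. -/
lemma conv_right_aux {g : ℝ → ℝ} (hg : ConvexOn ℝ Set.univ g) {v w x : ℝ}
    (hvw : v < w) (hwx : w ≤ x) (h : g v ≤ g w) : g w ≤ g x := by
  rcases eq_or_lt_of_le hwx with rfl | hwx
  · exact le_rfl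
  · exact hg.le_right_of_left_le (Set.mem_univ v) (Set.mem_univ x)
      (by rw [openSegment_eq_Ioo (hvw.trans hwx)]; exact ⟨hvw, hwx⟩) h

/-- A convex function is nonincreasing to the left of a point where it has decreased. -/
lemma conv_left_aux {g : ℝ → ℝ} (hg : ConvexOn ℝ Set.univ g) {x u v : ℝ}
    (hxu : x ≤ u) (huv : u < v) (h : g v ≤ g u) : g u ≤ g x := by
  rcases eq_or_lt_of_le hxu with rfl | hxu
  · exact le_rfl
  · exact hg.le_left_of_right_le (Set.mem_univ x) (Set.mem_univ v)
      (by rw [openSegment_eq_Ioo (hxu.trans huv)]; exact ⟨hxu, huv⟩) h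

/-- The min of a non-monotone convex function on `[u,w]` is a global min. -/
lemma conv_global_min {g : ℝ → ℝ} (hg : ConvexOn ℝ Set.univ g) {u v w x0 : ℝ}
    (huv : u < v) (hvw : v < w)
    (hv : g v < min (g u) (g w)) (hx0 : x0 ∈ Set.Icc u w)
    (hmin : IsMinOn g (Set.Icc u w) x0) :
    ∀ x, g x0 ≤ g x := by
  have hvu : g v ≤ g u := (lt_of_lt_of_le hv (min_le_left _ _)).le
  have hvw' : g v ≤ g w := (lt_of_lt_of_le hv (min_le_right _ _)).le
  intro x
  rcases le_or_gt x u with hxu | hxu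
  · exact le_trans (isMinOn_iff.1 hmin u ⟨le_refl u, (huv.trans hvw).le⟩)
      (conv_left_aux hg hxu huv hvu)
  · rcases le_or_gt w x with hwx | hwx
    · exact le_trans (isMinOn_iff.1 hmin w ⟨(huv.trans hvw).le, le_refl w⟩)
        (conv_right_aux hg hvw hwx hvw')
    · exact isMinOn_iff.1 hmin x ⟨hxu.le, hwx.le⟩

/-- Extrapolation lower bound for convex functions. -/
lemma conv_extrap {g : ℝ → ℝ} (hg : ConvexOn ℝ Set.univ g) {x q R : ℝ}
    (hxq : x < q) (hqR : q < R) :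
    g q - (q - x) * ((g R - g q) / (R - q)) ≤ g x := by
  have hslope := hg.slope_mono_adjacent (Set.mem_univ x) (Set.mem_univ R) hxq hqR
  have hqx : (0:ℝ) < q - x := sub_pos.2 hxq
  have h1 : g q - g x ≤ (q - x) * ((g R - g q) / (R - q)) := by
    have h2 := mul_le_mul_of_nonneg_left hslope hqx.le
    calc g q - g x = (q - x) * ((g q - g x) / (q - x)) := by field_simp
    _ ≤ (q - x) * ((g R - g q) / (R - q)) := h2
  linarith

/-- If `f, fₙ : ℝ → ℝ` are convex, `fₙ → f` pointwise, and `f` is not monotonic,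
then `inf fₙ → inf f` (infima taken in the extended reals). -/
theorem stmt_3 (f : ℝ → ℝ) (F : ℕ → ℝ → ℝ)
    (hf : ConvexOn ℝ Set.univ f) (hF : ∀ n, ConvexOn ℝ Set.univ (F n))
    (hconv : ∀ x : ℝ, Filter.Tendsto (fun n => F n x) Filter.atTop (nhds (f x)))
    (u v w : ℝ) (huv : u < v) (hvw : v < w)
    (hfv : f v < min (f u) (f w)) :
    Filter.Tendsto (fun n => ⨅ x : ℝ, ((F n x : EReal)))
      Filter.atTop (nhds (⨅ x : ℝ, ((f x : EReal)))) := by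
  classical
  have hfu : f v < f u := lt_of_lt_of_le hfv (min_le_left _ _)
  have hfw : f v < f w := lt_of_lt_of_le hfv (min_le_right _ _)
  have huw : u < w := huv.trans hvw
  have cf : Continuous f := hf.locallyLipschitz.continuous
  have cF : ∀ n, Continuous (F n) := fun n => (hF n).locallyLipschitz.continuous
  obtain ⟨xs, hxs, hxsmin⟩ := (isCompact_Icc (a := u) (b := w)).exists_isMinOn
    (Set.nonempty_Icc.2 huw.le) cf.continuousOn
  set m := f xs with hm
  have hglob : ∀ x, m ≤ f x := conv_global_min hf huv hvw hfv hxs hxsmin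
  have hinf_f : (⨅ x : ℝ, ((f x : EReal))) = (m : EReal) := by
    refine le_antisymm (iInf_le _ xs) (le_iInf fun x => ?_)
    exact_mod_cast hglob x
  clear_value m
  have hxn : ∀ n, ∃ y ∈ Set.Icc u w, IsMinOn (F n) (Set.Icc u w) y := fun n =>
    isCompact_Icc.exists_isMinOn (Set.nonempty_Icc.2 huw.le) (cF n).continuousOn
  choose xn hxn1 hxn2 using hxn
  set r : ℕ → ℝ := fun n => F n (xn n) with hr
  have hEv : ∀ᶠ n in atTop, F n v < min (F n u) (F n w) := by
    have h1 := (hconv v).eventually_lt (hconv u) hfu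
    have h2 := (hconv v).eventually_lt (hconv w) hfw
    filter_upwards [h1, h2] with n a b using lt_min a b
  have hEq : (fun n => ((r n : EReal))) =ᶠ[atTop]
      (fun n => ⨅ x : ℝ, ((F n x : EReal))) := by
    filter_upwards [hEv] with n hn
    have hglobn : ∀ x, F n (xn n) ≤ F n x :=
      conv_global_min (hF n) huv hvw hn (hxn1 n) (hxn2 n)
    have h1 : (⨅ x : ℝ, ((F n x : EReal))) ≤ ((F n (xn n) : EReal)) :=
      iInf_le (fun x => ((F n x : EReal))) (xn n)
    have h2 : ((F n (xn n) : EReal)) ≤ ⨅ x : ℝ, ((F n x : EReal)) :=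
      le_iInf fun x => by exact_mod_cast hglobn x
    show ((F n (xn n) : EReal)) = _
    exact le_antisymm h2 h1
  rw [hinf_f]
  have hclose : ∀ (y : ℝ) (η : ℝ), 0 < η → ∀ᶠ n in atTop, |F n y - f y| ≤ η := by
    intro y η hη
    have := Metric.tendsto_nhds.1 (hconv y) η hη
    filter_upwards [this] with n hn
    rw [Real.dist_eq] at hn; exact hn.le
  have key : Tendsto r atTop (nhds m) := by
    rw [Metric.tendsto_nhds]
    intro ε hε
    set η : ℝ := ε / 4 with hηdef
    have hη : 0 < η := by positivity
    set B : ℝ := f (w + 1) with hB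
    have hBm : m ≤ B := hglob (w + 1)
    clear_value B
    set C : ℝ := B - m with hCdef
    have hC : 0 ≤ C := sub_nonneg.2 hBm
    clear_value C
    set δ : ℝ := (ε / 4) / (C + 2 * η + 1) with hδdef
    have hδ : 0 < δ := by rw [hδdef]; positivity
    have hδC : δ * (C + 2 * η) ≤ ε / 4 := by
      have h1 : δ * (C + 2 * η + 1) = ε / 4 := by
        rw [hδdef]; exact div_mul_cancel₀ _ (by positivity)
      nlinarith
    clear_value δ
    set N : ℕ := ⌈(w - u) / δ⌉₊ + 1 with hNdef
    have hNceil : (w - u) / δ ≤ (N : ℝ) := by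
      rw [hNdef]; push_cast
      linarith [Nat.le_ceil ((w - u) / δ)]
    clear_value N
    have hN0 : 0 < (N : ℝ) := by
      rcases Nat.eq_zero_or_pos N with h | h
      · exfalso
        rw [h] at hNceil
        have hwu : 0 < w - u := sub_pos.2 huw
        have : 0 < (w - u) / δ := by positivity
        simpa using lt_of_lt_of_le this hNceil
      · exact_mod_cast h
    set s : ℝ := (w - u) / N with hsdef
    have hwu : 0 < w - u := sub_pos.2 huw
    have hs : 0 < s := by rw [hsdef]; positivity
    have hNs : (N : ℝ) * s = w - u := by
      rw [hsdef]; exact mul_div_cancel₀ _ (ne_of_gt hN0)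
    have hsδ : s ≤ δ := by
      rw [hsdef, div_le_iff₀ hN0]
      calc w - u = ((w - u) / δ) * δ := by field_simp
      _ ≤ (N : ℝ) * δ := mul_le_mul_of_nonneg_right hNceil hδ.le
      _ = δ * N := mul_comm _ _
    have hws : (w - u) / s = (N : ℝ) := by
      rw [← hNs]; field_simp
    clear_value s
    set p : ℕ → ℝ := fun i => u + i * s with hp
    have hLB : ∀ᶠ n in atTop, ∀ x ∈ Set.Icc u w, m - ε / 2 ≤ F n x := by
      have hgrid : ∀ᶠ n in atTop, ∀ i ∈ Finset.range (N + 1),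
          |F n (p i) - f (p i)| ≤ η :=
        (Finset.eventually_all (Finset.range (N + 1))).2 fun i _ => hclose (p i) η hη
      filter_upwards [hgrid, hclose (w + 1) η hη] with n hg hR
      intro x hx
      set i : ℕ := ⌈(x - u) / s⌉₊ with hi
      have hxu0 : 0 ≤ x - u := sub_nonneg.2 hx.1
      have hiceil : (x - u) / s ≤ (i : ℝ) := by rw [hi]; exact Nat.le_ceil _
      have hiceil2 : (i : ℝ) < (x - u) / s + 1 := by
        rw [hi]; exact Nat.ceil_lt_add_one (by positivity)
      have hiN : i ≤ N := by
        rw [hi, Nat.ceil_le, ← hws]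
        gcongr
        exact hx.2
      clear_value i
      set q : ℝ := p i with hq
      have hqval : q = u + i * s := by rw [hq, hp]
      clear_value q
      have hxq : x ≤ q := by
        have h2 : x - u ≤ (i : ℝ) * s := (div_le_iff₀ hs).1 hiceil
        rw [hqval]; linarith
      have hqx : q - x ≤ δ := by
        have h2 : (i : ℝ) * s < (x - u) + s := by
          have h3 := mul_lt_mul_of_pos_right hiceil2 hs
          rw [add_mul, one_mul, div_mul_cancel₀ _ (ne_of_gt hs)] at h3
          exact h3
        rw [hqval]; linarith [hsδ]
      have hqIcc : q ∈ Set.Icc u w := by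
        constructor
        · rw [hqval]; nlinarith [Nat.cast_nonneg (α := ℝ) i, hs.le]
        · have h1 : (i : ℝ) * s ≤ (N : ℝ) * s :=
            mul_le_mul_of_nonneg_right (by exact_mod_cast hiN) hs.le
          rw [hqval]; linarith [hNs ▸ h1]
      have hgq : |F n q - f q| ≤ η := by
        have h := hg i (Finset.mem_range.2 (Nat.lt_succ_of_le hiN))
        simp only [hp] at h
        rw [← hqval] at h
        exact h
      have hFq : m - η ≤ F n q := by
        have ha := hglob q
        have hb := (abs_le.1 hgq).1
        linarith
      rcases eq_or_lt_of_le hxq with heq | hlt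
      · rw [← heq] at hFq; rw [hηdef] at hFq; linarith
      · have hqR : q < w + 1 := lt_of_le_of_lt hqIcc.2 (by linarith)
        have hext := conv_extrap (hF n) hlt hqR
        set S : ℝ := (F n (w + 1) - F n q) / (w + 1 - q) with hS
        rcases le_or_gt S 0 with hS0 | hS0
        · have hmul : (q - x) * S ≤ 0 :=
            mul_nonpos_of_nonneg_of_nonpos (by linarith) hS0
          rw [hηdef] at hFq
          linarith
        · have hnum : 0 < F n (w + 1) - F n q := by
            by_contra hc
            push_neg at hc
            have : S ≤ 0 := by
              rw [hS]
              exact div_nonpos_of_nonpos_of_nonneg hc (by linarith [hqIcc.2])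
            linarith
          have hden : (1 : ℝ) ≤ w + 1 - q := by linarith [hqIcc.2]
          have hSle : S ≤ F n (w + 1) - F n q := by
            rw [hS]; exact div_le_self hnum.le hden
          clear_value S
          have hFR : F n (w + 1) ≤ B + η := by
            have hb := (abs_le.1 hR).2
            rw [hB]; linarith
          have hSbound : S ≤ C + 2 * η := by
            rw [hCdef]; linarith
          have hmul : (q - x) * S ≤ δ * (C + 2 * η) :=
            mul_le_mul hqx hSbound hS0.le hδ.le
          have h6 : m - η - ε / 4 ≤ F n x := by linarith
          rw [hηdef] at h6
          linarith
    have hUp : ∀ᶠ n in atTop, F n xs ≤ m + η := by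
      filter_upwards [hclose xs η hη] with n hn
      have hb := (abs_le.1 hn).2
      rw [hm]; linarith
    filter_upwards [hLB, hUp] with n h1 h2
    rw [Real.dist_eq]
    have hrle : r n ≤ F n xs := isMinOn_iff.1 (hxn2 n) xs hxs
    have hrge : m - ε / 2 ≤ r n := h1 (xn n) (hxn1 n)
    rw [hηdef] at h2
    have habs : |r n - m| ≤ ε / 2 := abs_le.2 ⟨by linarith, by linarith⟩
    linarith [half_lt_self hε]
  exact (EReal.tendsto_coe.2 key).congr' hEq
end

section
/- Let f : ℝ → [−∞, ∞] be convex, nondecreasing, with nonempty effective domain and inf_{ℝ} f > −∞. Then the functions fₙ(x) = f(x) + x/n are convex, converge pointwise to f, and satisfy inf_{ℝ} fₙ = −∞ for every n. Hence f is not infimum-stable. -/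
/-! Adding a linear term to `f` transforms its epigraph by a linear shear, so convexity is kept.
Being monotone and finite somewhere, `f` is bounded above by a real constant on a half-line
`(-∞, x₀]`, where the term `x / n` drives `f x + x / n` down to `-∞`. -/

open Filter Topology

namespace EReal

lemma convex_epigraph_add_linearMap {E : Type*} [AddCommGroup E] [Module ℝ E] {f : E → EReal}
    (hf : Convex ℝ {p : E × ℝ | f p.1 ≤ (p.2 : EReal)}) (ℓ : E →ₗ[ℝ] ℝ) :
    Convex ℝ {p : E × ℝ | f p.1 + (ℓ p.1 : EReal) ≤ (p.2 : EReal)} := by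
  have hshear : {p : E × ℝ | f p.1 + (ℓ p.1 : EReal) ≤ (p.2 : EReal)} =
      ((LinearMap.fst ℝ E ℝ).prod (LinearMap.snd ℝ E ℝ - ℓ.comp (LinearMap.fst ℝ E ℝ))) ⁻¹'
        {p : E × ℝ | f p.1 ≤ (p.2 : EReal)} := by
    ext p
    change f p.1 + (ℓ p.1 : EReal) ≤ p.2 ↔ f p.1 ≤ ((p.2 - ℓ p.1 : ℝ) : EReal)
    rw [coe_sub, le_sub_iff_add_le (.inl (coe_ne_bot _)) (.inl (coe_ne_top _))]
  exact hshear ▸ hf.linear_preimage _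

lemma tendsto_add_coe_of_tendsto_zero {α : Type*} {l : Filter α} (a : EReal) {u : α → ℝ}
    (hu : Tendsto u l (𝓝 0)) : Tendsto (fun i => a + (u i : EReal)) l (𝓝 a) := by
  have hadd : ContinuousAt (fun p : EReal × EReal => p.1 + p.2) (a, ((0 : ℝ) : EReal)) :=
    continuousAt_add (.inr (coe_ne_bot _)) (.inr (coe_ne_top _))
  simpa only [Function.comp_def, coe_zero, add_zero] using
    hadd.tendsto.comp (tendsto_const_nhds.prodMk_nhds (tendsto_coe.2 hu))

lemma iInf_add_coe_eq_bot_of_monotone {f : ℝ → EReal} (hmono : Monotone f) {x₀ : ℝ}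
    (hx₀ : f x₀ ≠ ⊤) {u : ℝ → ℝ} (hu : Tendsto u atBot atBot) :
    ⨅ x, f x + (u x : EReal) = ⊥ := by
  set c := (f x₀).toReal
  have hbound : ∀ᶠ x in atBot, ⨅ y, f y + (u y : EReal) ≤ ((c + u x : ℝ) : EReal) :=
    (eventually_le_atBot x₀).mono fun x hx => calc
      ⨅ y, f y + (u y : EReal) ≤ f x + (u x : EReal) := iInf_le _ x
      _ ≤ (c : EReal) + (u x : EReal) := by gcongr; exact (hmono hx).trans (le_coe_toReal hx₀)
      _ = ((c + u x : ℝ) : EReal) := (coe_add _ _).symm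
  exact le_bot_iff.1 <|
    ge_of_tendsto (tendsto_coe_nhds_bot_iff.2 (tendsto_atBot_add_const_left _ c hu)) hbound

end EReal

theorem stmt_7_general (f : ℝ → EReal)
    (hf : Convex ℝ {p : ℝ × ℝ | f p.1 ≤ (p.2 : EReal)})
    (hmono : Monotone f)
    (hdom : ∃ x : ℝ, f x ≠ ⊤) :
    (∀ n : ℕ, Convex ℝ {p : ℝ × ℝ | f p.1 + ((p.1 / (n : ℝ) : ℝ) : EReal) ≤ (p.2 : EReal)}) ∧
    (∀ x : ℝ, Filter.Tendsto (fun n : ℕ => f x + ((x / (n : ℝ) : ℝ) : EReal))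
        Filter.atTop (nhds (f x))) ∧
    (∀ n : ℕ, 0 < n → (⨅ x : ℝ, (f x + ((x / (n : ℝ) : ℝ) : EReal))) = ⊥) := by
  obtain ⟨x₀, hx₀⟩ := hdom
  refine ⟨fun n => ?_, fun x => ?_, fun n hn => ?_⟩
  · simpa only [LinearMap.mulRight_apply, ← div_eq_mul_inv] using
      EReal.convex_epigraph_add_linearMap hf (LinearMap.mulRight ℝ (n : ℝ)⁻¹)
  · exact EReal.tendsto_add_coe_of_tendsto_zero _ (tendsto_const_div_atTop_nhds_zero_nat x)
  · exact EReal.iInf_add_coe_eq_bot_of_monotone hmono hx₀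
      (tendsto_id.atBot_div_const (by positivity))

/-- If `f : ℝ → [−∞,∞]` is convex, nondecreasing, has nonempty effective
domain and `inf f > −∞`, then `fₙ(x) = f(x) + x/n` are convex, converge
pointwise to `f`, and have `inf fₙ = −∞` for every `n ≥ 1`.
Hence `f` is not infimum-stable. -/
theorem stmt_7 (f : ℝ → EReal)
    (hf : Convex ℝ {p : ℝ × ℝ | f p.1 ≤ (p.2 : EReal)})
    (hmono : Monotone f)
    (hdom : ∃ x : ℝ, f x ≠ ⊤)
    (hinf : (⊥ : EReal) < ⨅ x : ℝ, f x) :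
    (∀ n : ℕ, Convex ℝ {p : ℝ × ℝ | f p.1 + ((p.1 / (n : ℝ) : ℝ) : EReal) ≤ (p.2 : EReal)}) ∧
    (∀ x : ℝ, Filter.Tendsto (fun n : ℕ => f x + ((x / (n : ℝ) : ℝ) : EReal))
        Filter.atTop (nhds (f x))) ∧
    (∀ n : ℕ, 0 < n → (⨅ x : ℝ, (f x + ((x / (n : ℝ) : ℝ) : EReal))) = ⊥) :=
  stmt_7_general f hf hmono hdom
end

section
/- Let f : ℝ → [−∞, ∞] be a convex function. Then f is infimum-stable (for every sequence of convex functions fₙ : ℝ → [−∞,∞] converging pointwise to f one has inf fₙ → inf f) if and only if either: (i) the effective domain of f has more than one point and f is not monotonic, or (ii) inf_{ℝ} f = −∞. -/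
/-!
Since `⨅ Fₙ ≤ Fₙ x → f x`, the infima of the approximants can never end up above `⨅ f`; the
point is whether they can stay below it. Convexity of `Fₙ` turns a lower bound `β < Fₙ p` and an
upper bound `Fₙ q < γ` with `p < q` into the lower bound `r < Fₙ x` at every `x < p` with
`(p - x) (γ - β) ≤ (q - p) (β - r)`. If `f` is not monotone, points `a < b` with `f b < f a`
give such a barrier with `γ = β`, valid on all of `(-∞, a)`; symmetrically on some `(d, ∞)`.
On the compact `[a, d]`, taking `r < β < ⨅ f` and a point of `dom f` other than `t` as `q`
gives a barrier on a neighbourhood of each `t`.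

Conversely, let `⨅ f > -∞`. A monotone `f` is the limit of the convex tilts
`f x + x / (n + 1)`, whose infima are `-∞`. If `dom f ⊆ {x₀}`, then `f` is the limit of
V-shaped functions equal to `f x₀` at `x₀` with minimum `f x₀ - 1` (or of `|x - n|` if
`f ≡ ∞`).
-/

open Filter Topology Set

def ConvexEpigraph (f : ℝ → EReal) : Prop :=
  Convex ℝ {p : ℝ × ℝ | f p.1 ≤ (p.2 : EReal)}

def InfStable (f : ℝ → EReal) : Prop :=
  ∀ F : ℕ → ℝ → EReal, (∀ n, ConvexEpigraph (F n)) →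
    (∀ x, Tendsto (fun n => F n x) atTop (𝓝 (f x))) →
    Tendsto (fun n => ⨅ x, F n x) atTop (𝓝 (⨅ x, f x))

theorem convexEpigraph_iff {f : ℝ → EReal} :
    ConvexEpigraph f ↔ ∀ ⦃x y s t a b : ℝ⦄, 0 ≤ a → 0 ≤ b → a + b = 1 →
      f x ≤ s → f y ≤ t → f (a * x + b * y) ≤ ((a * s + b * t : ℝ) : EReal) := by
  constructor
  · intro hf x y s t a b ha hb hab hx hy
    simpa using hf (x := (x, s)) (y := (y, t)) hx hy ha hb hab
  · intro h p hp q hq a b ha hb hab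
    simpa using h ha hb hab hp hq

theorem ConvexOn.convexEpigraph_coe {g : ℝ → ℝ} (hg : ConvexOn ℝ univ g) :
    ConvexEpigraph fun x => (g x : EReal) := by
  refine convexEpigraph_iff.2 fun x y s t a b ha hb hab hx hy => ?_
  rw [EReal.coe_le_coe_iff] at hx hy ⊢
  have := hg.2 (mem_univ x) (mem_univ y) ha hb hab
  simp only [smul_eq_mul] at this
  linarith [mul_le_mul_of_nonneg_left hx ha, mul_le_mul_of_nonneg_left hy hb]

namespace ConvexEpigraph

variable {f : ℝ → EReal}

theorem apply_le (hf : ConvexEpigraph f) {x y s t a b : ℝ} (ha : 0 ≤ a) (hb : 0 ≤ b)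
    (hab : a + b = 1) (hx : f x ≤ s) (hy : f y ≤ t) :
    f (a * x + b * y) ≤ ((a * s + b * t : ℝ) : EReal) :=
  convexEpigraph_iff.1 hf ha hb hab hx hy

theorem comp_neg (hf : ConvexEpigraph f) : ConvexEpigraph fun x => f (-x) :=
  convexEpigraph_iff.2 fun x y s t a b ha hb hab hx hy => by
    convert hf.apply_le ha hb hab hx hy using 2
    ring

theorem add_convexOn (hf : ConvexEpigraph f) {g : ℝ → ℝ} (hg : ConvexOn ℝ univ g) :
    ConvexEpigraph fun x => f x + g x := by
  have add_le_iff : ∀ {e : EReal} {u v : ℝ}, e + u ≤ v ↔ e ≤ ((v - u : ℝ) : EReal) := by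
    intro e u v
    rw [EReal.coe_sub, EReal.le_sub_iff_add_le (.inl (EReal.coe_ne_bot u))
      (.inl (EReal.coe_ne_top u))]
  refine convexEpigraph_iff.2 fun x y s t a b ha hb hab hx hy => ?_
  rw [add_le_iff] at hx hy ⊢
  refine (hf.apply_le ha hb hab hx hy).trans (EReal.coe_le_coe_iff.2 ?_)
  have := hg.2 (mem_univ x) (mem_univ y) ha hb hab
  simp only [smul_eq_mul] at this
  linarith

/-- If `f x ≤ r`, convexity on `[x, q]` would force `f p ≤ β`. -/
theorem lt_apply_of_lt_of_le (hf : ConvexEpigraph f) {x p q r β γ : ℝ} (hxp : x < p)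
    (hpq : p < q) (hp : (β : EReal) < f p) (hq : f q ≤ γ)
    (h : (p - x) * (γ - β) ≤ (q - p) * (β - r)) : (r : EReal) < f x := by
  by_contra! hx
  have hqx : 0 < q - x := by linarith
  have key := hf.apply_le (div_nonneg (sub_nonneg.2 hpq.le) hqx.le)
    (div_nonneg (sub_nonneg.2 hxp.le) hqx.le) (by field_simp; ring) hx hq
  have hcomb : (q - p) / (q - x) * x + (p - x) / (q - x) * q = p := by field_simp; ring
  have hval : (q - p) / (q - x) * r + (p - x) / (q - x) * γ ≤ β := by
    have : β - ((q - p) / (q - x) * r + (p - x) / (q - x) * γ)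
        = ((q - p) * (β - r) - (p - x) * (γ - β)) / (q - x) := by field_simp; ring
    rw [← sub_nonneg, this]
    exact div_nonneg (by linarith) hqx.le
  rw [hcomb] at key
  exact (hp.trans_le (key.trans (EReal.coe_le_coe_iff.2 hval))).false

end ConvexEpigraph

section LinearOrder

variable {α β : Type*} [LinearOrder α] [LinearOrder β] {f : α → β}

theorem exists_lt_apply_lt_of_not_monotone (h : ¬Monotone f) : ∃ a b, a < b ∧ f b < f a := by
  simp only [Monotone, not_forall, not_le] at h
  obtain ⟨a, b, hab, hba⟩ := h
  exact ⟨a, b, hab.lt_of_ne (by rintro rfl; exact hba.false), hba⟩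

theorem exists_lt_apply_lt_of_not_antitone (h : ¬Antitone f) : ∃ a b, a < b ∧ f a < f b := by
  simp only [Antitone, not_forall, not_le] at h
  obtain ⟨a, b, hab, hab'⟩ := h
  exact ⟨a, b, hab.lt_of_ne (by rintro rfl; exact hab'.false), hab'⟩

end LinearOrder

theorem exists_pos_lt_forall_mul_le {D c : ℝ} (hD : 0 < D) (hc : 0 < c) (g : ℝ) :
    ∃ η > 0, η < D ∧ ∀ y, 0 < y → y < 2 * η → y * g ≤ (D - η) * c := by
  obtain ⟨η, hη, hlt⟩ := exists_pos_mul_lt (mul_pos hD hc) (2 * |g| + c)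
  refine ⟨η, hη, by nlinarith [abs_nonneg g], fun y hy hyη => ?_⟩
  nlinarith [abs_nonneg g, mul_le_mul_of_nonneg_left (le_abs_self g) hy.le]

section Approximants

variable {f : ℝ → EReal} {F : ℕ → ℝ → EReal}

theorem eventually_lt_apply_of_lt_of_lt (hF : ∀ n, ConvexEpigraph (F n))
    (hlim : ∀ x, Tendsto (fun n => F n x) atTop (𝓝 (f x))) {p q r β γ : ℝ} (hpq : p < q)
    (hp : (β : EReal) < f p) (hq : f q < γ) :
    ∀ᶠ n in atTop, ∀ x < p, (p - x) * (γ - β) ≤ (q - p) * (β - r) → (r : EReal) < F n x := by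
  filter_upwards [(hlim p).eventually_const_lt hp, (hlim q).eventually_lt_const hq]
    with n hpn hqn x hxp h
  exact (hF n).lt_apply_of_lt_of_le hxp hpq hpn hqn.le h

theorem eventually_lt_apply_of_lt_of_lt' (hF : ∀ n, ConvexEpigraph (F n))
    (hlim : ∀ x, Tendsto (fun n => F n x) atTop (𝓝 (f x))) {p q r β γ : ℝ} (hqp : q < p)
    (hp : (β : EReal) < f p) (hq : f q < γ) :
    ∀ᶠ n in atTop, ∀ x, p < x → (x - p) * (γ - β) ≤ (p - q) * (β - r) →
      (r : EReal) < F n x := by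
  have := eventually_lt_apply_of_lt_of_lt (r := r) (fun n => (hF n).comp_neg)
    (fun x => hlim (-x)) (neg_lt_neg hqp) (by simpa using hp) (by simpa using hq)
  filter_upwards [this] with n hn x hpx h
  simpa using hn (-x) (neg_lt_neg hpx) (by simpa only [neg_sub_neg] using h)

theorem eventually_forall_Iio_lt_apply (hF : ∀ n, ConvexEpigraph (F n))
    (hlim : ∀ x, Tendsto (fun n => F n x) atTop (𝓝 (f x))) {a b r : ℝ} (hab : a < b)
    (hba : f b < f a) (hr : (r : EReal) < f a) :
    ∀ᶠ n in atTop, ∀ x < a, (r : EReal) < F n x := by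
  obtain ⟨β, hβ, hβa⟩ := EReal.lt_iff_exists_real_btwn.1 (max_lt hba hr)
  have hrβ : r < β := EReal.coe_lt_coe_iff.1 ((le_max_right _ _).trans_lt hβ)
  filter_upwards [eventually_lt_apply_of_lt_of_lt (r := r) hF hlim hab hβa
    ((le_max_left _ _).trans_lt hβ)] with n hn x hx
  exact hn x hx (by rw [sub_self, mul_zero]; exact mul_nonneg (by linarith) (by linarith))

theorem eventually_forall_Ioi_lt_apply (hF : ∀ n, ConvexEpigraph (F n))
    (hlim : ∀ x, Tendsto (fun n => F n x) atTop (𝓝 (f x))) {c d r : ℝ} (hcd : c < d)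
    (hdc : f c < f d) (hr : (r : EReal) < f d) :
    ∀ᶠ n in atTop, ∀ x, d < x → (r : EReal) < F n x := by
  obtain ⟨β, hβ, hβd⟩ := EReal.lt_iff_exists_real_btwn.1 (max_lt hdc hr)
  have hrβ : r < β := EReal.coe_lt_coe_iff.1 ((le_max_right _ _).trans_lt hβ)
  filter_upwards [eventually_lt_apply_of_lt_of_lt' (r := r) hF hlim hcd hβd
    ((le_max_left _ _).trans_lt hβ)] with n hn x hx
  exact hn x hx (by rw [sub_self, mul_zero]; exact mul_nonneg (by linarith) (by linarith))

theorem eventually_lt_apply_nhds (hF : ∀ n, ConvexEpigraph (F n))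
    (hlim : ∀ x, Tendsto (fun n => F n x) atTop (𝓝 (f x))) {t z r β : ℝ} (hzt : z ≠ t)
    (hfz : f z ≠ ⊤) (hrβ : r < β) (hβ : ∀ x, (β : EReal) < f x) :
    ∀ᶠ nx in atTop ×ˢ 𝓝 t, (r : EReal) < F nx.1 nx.2 := by
  obtain ⟨γ, hzγ, -⟩ := EReal.lt_iff_exists_real_btwn.1 (lt_top_iff_ne_top.2 hfz)
  rcases hzt.lt_or_gt with hz | hz
  · obtain ⟨η, hη, hηD, hy⟩ :=
      exists_pos_lt_forall_mul_le (sub_pos.2 hz) (sub_pos.2 hrβ) (γ - β)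
    have hnear : Ioo (t - η) (t + η) ∈ 𝓝 t := Ioo_mem_nhds (by linarith) (by linarith)
    filter_upwards [(eventually_lt_apply_of_lt_of_lt' (p := t - η) (r := r) hF hlim
      (by linarith) (hβ _) hzγ).prod_mk hnear] with ⟨n, x⟩ ⟨hn, hx⟩
    refine hn x (by linarith [hx.1]) ?_
    have := hy (x - (t - η)) (by linarith [hx.1]) (by linarith [hx.2])
    linarith
  · obtain ⟨η, hη, hηD, hy⟩ :=
      exists_pos_lt_forall_mul_le (sub_pos.2 hz) (sub_pos.2 hrβ) (γ - β)
    have hnear : Ioo (t - η) (t + η) ∈ 𝓝 t := Ioo_mem_nhds (by linarith) (by linarith)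
    filter_upwards [(eventually_lt_apply_of_lt_of_lt (p := t + η) (r := r) hF hlim
      (by linarith) (hβ _) hzγ).prod_mk hnear] with ⟨n, x⟩ ⟨hn, hx⟩
    refine hn x (by linarith [hx.2]) ?_
    have := hy (t + η - x) (by linarith [hx.2]) (by linarith [hx.1])
    linarith

theorem eventually_forall_lt_apply (hF : ∀ n, ConvexEpigraph (F n))
    (hlim : ∀ x, Tendsto (fun n => F n x) atTop (𝓝 (f x)))
    (hdom : {x | f x ≠ ⊤}.Nontrivial) (hmono : ¬(Monotone f ∨ Antitone f)) {r : ℝ}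
    (hr : (r : EReal) < ⨅ x, f x) : ∀ᶠ n in atTop, ∀ x, (r : EReal) < F n x := by
  obtain ⟨hm, ha⟩ := not_or.1 hmono
  obtain ⟨a, b, hab, hba⟩ := exists_lt_apply_lt_of_not_monotone hm
  obtain ⟨c, d, hcd, hdc⟩ := exists_lt_apply_lt_of_not_antitone ha
  obtain ⟨β, hrβ, hβ⟩ := EReal.lt_iff_exists_real_btwn.1 hr
  have hrf : ∀ x, (r : EReal) < f x := fun x => hr.trans_le (iInf_le f x)
  have hmid : ∀ᶠ n in atTop, ∀ x ∈ Icc a d, (r : EReal) < F n x := by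
    have : ∀ᶠ nx in atTop ×ˢ 𝓝ˢ (Icc a d), (r : EReal) < F nx.1 nx.2 :=
      isCompact_Icc.mem_prod_nhdsSet_of_forall fun t _ => by
        obtain ⟨z, hz, hzt⟩ := hdom.exists_ne t
        exact eventually_lt_apply_nhds hF hlim hzt hz (EReal.coe_lt_coe_iff.1 hrβ)
          fun x => hβ.trans_le (iInf_le f x)
    exact this.curry.mono fun n hn => hn.self_of_nhdsSet
  filter_upwards [eventually_forall_Iio_lt_apply hF hlim hab hba (hrf a),
    eventually_forall_Ioi_lt_apply hF hlim hcd hdc (hrf d), hmid] with n hleft hright hn x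
  rcases lt_or_ge x a with hxa | hax
  · exact hleft x hxa
  rcases lt_or_ge d x with hdx | hxd
  · exact hright x hdx
  exact hn x ⟨hax, hxd⟩

theorem eventually_iInf_lt (hlim : ∀ x, Tendsto (fun n => F n x) atTop (𝓝 (f x)))
    {c : EReal} (hc : ⨅ x, f x < c) : ∀ᶠ n in atTop, ⨅ x, F n x < c := by
  obtain ⟨x, hx⟩ := iInf_lt_iff.1 hc
  exact ((hlim x).eventually_lt_const hx).mono fun n hn => (iInf_le _ x).trans_lt hn

end Approximants

section Stability

variable {f : ℝ → EReal}

theorem infStable_of_iInf_eq_bot (h : ⨅ x, f x = ⊥) : InfStable f := fun _ _ hlim =>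
  tendsto_order.2 ⟨fun _ hl => absurd hl (h ▸ not_lt_bot), fun _ => eventually_iInf_lt hlim⟩

theorem infStable_of_not_monotone (hdom : {x | f x ≠ ⊤}.Nontrivial)
    (hmono : ¬(Monotone f ∨ Antitone f)) : InfStable f := by
  intro F hF hlim
  refine tendsto_order.2 ⟨fun l hl => ?_, fun _ => eventually_iInf_lt hlim⟩
  obtain ⟨r, hlr, hr⟩ := EReal.lt_iff_exists_real_btwn.1 hl
  filter_upwards [eventually_forall_lt_apply hF hlim hdom hmono hr] with n hn
  exact hlr.trans_le (le_iInf fun x => (hn x).le)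

theorem InfStable.comp_neg (h : InfStable f) : InfStable fun x => f (-x) := by
  intro F hF hlim
  have := h (fun n x => F n (-x)) (fun n => (hF n).comp_neg) (fun x => by simpa using hlim (-x))
  simpa only [neg_surjective.iInf_comp] using this

theorem Monotone.iInf_add_mul_eq_bot (hm : Monotone f) {x₀ : ℝ} (hx₀ : f x₀ ≠ ⊤) {c : ℝ}
    (hc : 0 < c) : ⨅ x, f x + ((c * x : ℝ) : EReal) = ⊥ := by
  obtain ⟨w, hw, -⟩ := EReal.lt_iff_exists_real_btwn.1 (lt_top_iff_ne_top.2 hx₀)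
  refine (EReal.eq_bot_iff_forall_lt _).2 fun M => ?_
  set x := min x₀ ((M - w) / c)
  have hcx : c * x ≤ M - w := by
    have := mul_le_mul_of_nonneg_left (min_le_right x₀ ((M - w) / c)) hc.le
    rwa [mul_div_cancel₀ _ hc.ne'] at this
  calc ⨅ y, f y + ((c * y : ℝ) : EReal) ≤ f x + ((c * x : ℝ) : EReal) := iInf_le _ x
    _ < w + ((c * x : ℝ) : EReal) :=
      EReal.add_lt_add_right_coe ((hm (min_le_left _ _)).trans_lt hw) _
    _ ≤ M := by rw [← EReal.coe_add, EReal.coe_le_coe_iff]; linarith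

theorem not_infStable_of_monotone (hf : ConvexEpigraph f) (hm : Monotone f) {x₀ : ℝ}
    (hx₀ : f x₀ ≠ ⊤) (hbot : ⨅ x, f x ≠ ⊥) : ¬InfStable f := by
  intro h
  have hpos : ∀ n : ℕ, (0 : ℝ) < 1 / ((n : ℝ) + 1) := fun n => by positivity
  have hF : ∀ n : ℕ, ConvexEpigraph fun x => f x + ((1 / ((n : ℝ) + 1) * x : ℝ) : EReal) :=
    fun n => hf.add_convexOn ((convexOn_id convex_univ).smul (hpos n).le)
  have hlim : ∀ x, Tendsto (fun n : ℕ => f x + ((1 / ((n : ℝ) + 1) * x : ℝ) : EReal)) atTop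
      (𝓝 (f x)) := by
    intro x
    have h0 : Tendsto (fun n : ℕ => ((1 / ((n : ℝ) + 1) * x : ℝ) : EReal)) atTop (𝓝 0) := by
      simpa using EReal.tendsto_coe.2 (tendsto_one_div_add_atTop_nhds_zero_nat.mul_const x)
    have := (EReal.continuousAt_add (p := (f x, 0)) (.inr (by simp))
      (.inr (by simp))).tendsto.comp (tendsto_const_nhds.prodMk_nhds h0)
    simpa only [Function.comp_def, add_zero] using this
  exact hbot (le_bot_iff.1 (le_of_tendsto' (h _ hF hlim)
    fun n => (hm.iInf_add_mul_eq_bot hx₀ (hpos n)).le))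

theorem not_infStable_of_antitone (hf : ConvexEpigraph f) (ha : Antitone f) {x₀ : ℝ}
    (hx₀ : f x₀ ≠ ⊤) (hbot : ⨅ x, f x ≠ ⊥) : ¬InfStable f := fun h =>
  not_infStable_of_monotone hf.comp_neg (fun _ _ hxy => ha (neg_le_neg hxy))
    (x₀ := -x₀) (by simpa using hx₀) (by rwa [neg_surjective.iInf_comp f]) h.comp_neg

theorem not_infStable_of_forall_eq_top (htop : ∀ x, f x = ⊤) : ¬InfStable f := by
  intro h
  have hlim : ∀ x : ℝ, Tendsto (fun n : ℕ => (dist x n : EReal)) atTop (𝓝 (f x)) := by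
    intro x
    rw [htop, EReal.tendsto_coe_nhds_top_iff]
    refine tendsto_atTop_mono (fun n => ?_)
      (tendsto_atTop_add_const_right _ (-x) tendsto_natCast_atTop_atTop)
    rw [Real.dist_eq, abs_sub_comm]
    exact le_abs_self _
  have : ⨅ x, f x ≤ 0 :=
    le_of_tendsto' (h _ (fun n => (convexOn_univ_dist _).convexEpigraph_coe) hlim)
      fun n => iInf_le_of_le (n : ℝ) (by simp)
  simp [htop] at this

theorem not_infStable_of_eq_top_of_ne {x₀ : ℝ} (htop : ∀ x ≠ x₀, f x = ⊤) (hx₀ : f x₀ ≠ ⊤)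
    (hbot : f x₀ ≠ ⊥) : ¬InfStable f := by
  intro h
  set v := (f x₀).toReal
  have hv : f x₀ = v := (EReal.coe_toReal hx₀ hbot).symm
  have hinf : ⨅ x, f x = v := by
    refine le_antisymm (hv ▸ iInf_le f x₀) (le_iInf fun x => ?_)
    rcases eq_or_ne x x₀ with rfl | hx
    · exact hv.ge
    · simp [htop x hx]
  set F : ℕ → ℝ → ℝ := fun n x => ((n : ℝ) + 1) * dist x (x₀ + 1 / ((n : ℝ) + 1)) + (v - 1)
  have hF : ∀ n, ConvexOn ℝ univ (F n) := fun n =>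
    ((convexOn_univ_dist _).smul (by positivity)).add_const _
  have hlim : ∀ x, Tendsto (fun n => (F n x : EReal)) atTop (𝓝 (f x)) := by
    intro x
    rcases eq_or_ne x x₀ with rfl | hx
    · have : ∀ n, F n x = v := fun n => by
        simp only [F, Real.dist_eq, sub_add_cancel_left, abs_neg]
        rw [abs_of_pos (by positivity), mul_one_div_cancel (by positivity)]
        ring
      simp [this, hv]
    · rw [htop x hx, EReal.tendsto_coe_nhds_top_iff]
      have hd : Tendsto (fun n : ℕ => dist x (x₀ + 1 / ((n : ℝ) + 1))) atTop
          (𝓝 (dist x x₀)) := by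
        have : Tendsto (fun n : ℕ => x₀ + 1 / ((n : ℝ) + 1)) atTop (𝓝 x₀) := by
          simpa using (tendsto_const_nhds (x := x₀)).add tendsto_one_div_add_atTop_nhds_zero_nat
        exact tendsto_const_nhds.dist this
      exact tendsto_atTop_add_const_right _ _
        ((tendsto_atTop_add_const_right _ 1 tendsto_natCast_atTop_atTop).atTop_mul_pos
          (dist_pos.2 hx) hd)
  have : ⨅ x, f x ≤ ((v - 1 : ℝ) : EReal) :=
    le_of_tendsto' (h _ (fun n => (hF n).convexEpigraph_coe) hlim)
      fun n => iInf_le_of_le (x₀ + 1 / ((n : ℝ) + 1)) (by simp [F])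
  rw [hinf, EReal.coe_le_coe_iff] at this
  linarith

theorem not_infStable_of_subsingleton (hdom : {x | f x ≠ ⊤}.Subsingleton)
    (hbot : ⨅ x, f x ≠ ⊥) : ¬InfStable f := by
  rcases hdom.eq_empty_or_singleton with hempty | ⟨x₀, hx₀⟩
  · exact not_infStable_of_forall_eq_top fun x => by
      simpa using Set.eq_empty_iff_forall_notMem.1 hempty x
  · have hmem : ∀ x, f x ≠ ⊤ ↔ x = x₀ := fun x => Set.ext_iff.1 hx₀ x
    exact not_infStable_of_eq_top_of_ne (fun x hx => not_not.1 fun h => hx ((hmem x).1 h))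
      ((hmem x₀).2 rfl) fun h => hbot (le_bot_iff.1 (h ▸ iInf_le f x₀))

end Stability

/-- Main theorem: a convex `f : ℝ → [−∞,∞]` is infimum-stable iff either
(i) its effective domain has more than one point and `f` is not monotonic,
or (ii) `inf f = −∞`. -/
theorem stmt_8 (f : ℝ → EReal)
    (hf : Convex ℝ {p : ℝ × ℝ | f p.1 ≤ (p.2 : EReal)}) :
    (∀ F : ℕ → ℝ → EReal,
        (∀ n, Convex ℝ {p : ℝ × ℝ | F n p.1 ≤ (p.2 : EReal)}) →
        (∀ x : ℝ, Filter.Tendsto (fun n => F n x) Filter.atTop (nhds (f x))) →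
        Filter.Tendsto (fun n => ⨅ x : ℝ, F n x) Filter.atTop (nhds (⨅ x : ℝ, f x)))
      ↔
    (({x : ℝ | f x ≠ ⊤}.Nontrivial ∧ ¬ (Monotone f ∨ Antitone f)) ∨
      (⨅ x : ℝ, f x) = ⊥) := by
  change InfStable f ↔ _
  refine ⟨fun h => ?_, fun h => h.elim (fun h => infStable_of_not_monotone h.1 h.2)
    infStable_of_iInf_eq_bot⟩
  by_contra! ⟨hmono, hbot⟩
  by_cases hdom : {x | f x ≠ ⊤}.Nontrivial
  · obtain ⟨x₀, hx₀⟩ := hdom.nonempty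
    rcases hmono hdom with hm | ha
    · exact not_infStable_of_monotone hf hm hx₀ hbot h
    · exact not_infStable_of_antitone hf ha hx₀ hbot h
  · exact not_infStable_of_subsingleton (not_nontrivial_iff.1 hdom) hbot h
end

section
/- Let C = [a, b] with a < b real, and let f : C → [−∞, ∞] be convex. Then f is infimum-stable (for every sequence of convex functions fₙ : C → [−∞,∞] converging pointwise to f one has inf_C fₙ → inf_C f) if and only if either dom f has more than one point or inf_C f = −∞. -/
/-!
Pointwise convergence alone gives `limsup inf Fₙ ≤ inf f`. For the reverse inequality, suppose
that along a subsequence `Fₙ(zₙ) < r < inf f` with `zₙ → y`. For `p ≠ y` in `dom f`, convexity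
of `Fₙ` on the segment `[p, zₙ]` bounds `Fₙ` at a fixed point `p + t (y - p)` by roughly
`t r + (1 - t) f(p)`, which is below `inf f` for `t` close to `1`, contradicting `Fₙ → f` there.

If instead `dom f ⊆ {x₀}` and `f x₀ > -∞`, let `Fₙ` be `⊤` off `[x₀, wₙ]` and affine on it,
from `yₙ → f x₀` at `x₀` down to a fixed real `d < f x₀` at `wₙ`, where `wₙ → x₀`, `wₙ ≠ x₀`.
Then `Fₙ → f` pointwise but `inf Fₙ ≤ d < f x₀ = inf f`.
-/

open Filter Set Topology

def realEpigraph {E : Type*} (s : Set E) (f : E → EReal) : Set (E × ℝ) :=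
  {p | p.1 ∈ s ∧ f p.1 ≤ p.2}

lemma apply_add_le_of_convex_realEpigraph {E : Type*} [AddCommGroup E] [Module ℝ E]
    {s : Set E} {f : E → EReal} (hf : Convex ℝ (realEpigraph s f)) {x y : E} {r r' : ℝ}
    (hx : x ∈ s) (hy : y ∈ s) (hfx : f x ≤ r) (hfy : f y ≤ r') {θ θ' : ℝ}
    (hθ : 0 ≤ θ) (hθ' : 0 ≤ θ') (hθθ' : θ + θ' = 1) :
    f (θ • x + θ' • y) ≤ ↑(θ * r + θ' * r') :=
  (hf (x := (x, r)) (y := (y, r')) ⟨hx, hfx⟩ ⟨hy, hfy⟩ hθ hθ' hθθ').2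

lemma ConvexOn.convex_realEpigraph_ite {E : Type*} [AddCommGroup E] [Module ℝ E]
    {s t : Set E} {g : E → ℝ} (hg : ConvexOn ℝ t g) (hts : t ⊆ s) [DecidablePred (· ∈ t)] :
    Convex ℝ (realEpigraph s fun x => if x ∈ t then (g x : EReal) else ⊤) := by
  convert hg.convex_epigraph using 1
  ext ⟨x, r⟩
  by_cases hx : x ∈ t
  · simp [realEpigraph, hx, hts hx]
  · simp [realEpigraph, hx]

lemma convexOn_add_mul_sub {s : Set ℝ} (hs : Convex ℝ s) (c k x₀ : ℝ) :
    ConvexOn ℝ s fun x => c + k * (x - x₀) :=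
  ⟨hs, fun x _ y _ θ θ' _ _ hθθ' => le_of_eq <| by
    simp only [smul_eq_mul]; linear_combination (k * x₀ - c) * hθθ'⟩

lemma limsup_iInf_le {X α ι : Type*} [CompleteLinearOrder α] [TopologicalSpace α]
    [OrderTopology α] {l : Filter ι} [l.NeBot] {s : Set X} {f : X → α} {F : ι → X → α}
    (hlim : ∀ x ∈ s, Tendsto (F · x) l (𝓝 (f x))) :
    limsup (fun i => ⨅ x ∈ s, F i x) l ≤ ⨅ x ∈ s, f x :=
  le_iInf₂ fun x hx => (limsup_le_limsup (.of_forall fun _ => iInf₂_le x hx)).trans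
    (hlim x hx).limsup_eq.le

lemma eventually_lt_of_convex_realEpigraph {ι : Type*} {l : Filter ι} {s : Set ℝ}
    {G : ι → ℝ → EReal} (hG : ∀ i, Convex ℝ (realEpigraph s (G i))) {z : ι → ℝ}
    {y p r r' t c : ℝ} (hzs : ∀ i, z i ∈ s) (hGz : ∀ i, G i (z i) ≤ r)
    (hzy : Tendsto z l (𝓝 y)) (hp : p ∈ s) (hpy : p ≠ y) (hGp : ∀ᶠ i in l, G i p ≤ r')
    (ht : t ∈ Ioo 0 1) (hc : t * r + (1 - t) * r' < c) :
    ∀ᶠ i in l, G i (p + t * (y - p)) < c := by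
  have hyp : y - p ≠ 0 := sub_ne_zero.2 hpy.symm
  -- `p + t * (y - p) = θ i * z i + (1 - θ i) * p`, and `θ i → t` since `z i → y`
  set θ : ι → ℝ := fun i => t * (y - p) / (z i - p)
  have hθ : Tendsto θ l (𝓝 t) := by
    have h := (tendsto_const_nhds (x := t * (y - p))).div (hzy.sub_const p) hyp
    rwa [mul_div_cancel_right₀ _ hyp] at h
  have hcomb : Tendsto (fun i => θ i * r + (1 - θ i) * r') l (𝓝 (t * r + (1 - t) * r')) :=
    ((hθ.mul_const r).add ((tendsto_const_nhds.sub hθ).mul_const r'))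
  filter_upwards [hθ.eventually (lt_mem_nhds ht.1), hθ.eventually (gt_mem_nhds ht.2),
    hzy.eventually_ne hpy.symm, hcomb.eventually (gt_mem_nhds hc), hGp]
    with i hθ0 hθ1 hzp hlt hGpi
  have hx : p + t * (y - p) = θ i • z i + (1 - θ i) • p := by
    simp only [θ, smul_eq_mul]; field_simp [sub_ne_zero.2 hzp]; ring
  rw [hx]
  exact (apply_add_le_of_convex_realEpigraph (hG i) (hzs i) hp (hGz i) hGpi hθ0.le
    (by linarith) (by ring)).trans_lt (EReal.coe_lt_coe_iff.2 hlt)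

lemma exists_seq_tendsto_of_liminf_iInf_lt {X : Type*} [TopologicalSpace X]
    [FirstCountableTopology X] {s : Set X} (hs : IsCompact s) {F : ℕ → X → EReal} {r : EReal}
    (h : liminf (fun n => ⨅ x ∈ s, F n x) atTop < r) :
    ∃ φ : ℕ → ℕ, StrictMono φ ∧ ∃ z : ℕ → X, (∀ k, z k ∈ s ∧ F (φ k) (z k) < r) ∧
      ∃ y ∈ s, Tendsto z atTop (𝓝 y) := by
  obtain ⟨φ, hφ, hlt⟩ :=
    extraction_of_frequently_atTop (frequently_lt_of_liminf_lt (by isBoundedDefault) h)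
  simp only [iInf_lt_iff, exists_prop] at hlt
  choose z hz using hlt
  obtain ⟨y, hy, ψ, hψ, hzy⟩ := hs.tendsto_subseq fun k => (hz k).1
  exact ⟨φ ∘ ψ, hφ.comp hψ, z ∘ ψ, fun k => hz (ψ k), y, hy, hzy⟩

lemma exists_mem_Ioo_mul_add_one_sub_mul_lt {r μ : ℝ} (hrμ : r < μ) (r' : ℝ) :
    ∃ t ∈ Ioo (0 : ℝ) 1, t * r + (1 - t) * r' < μ := by
  have hcont : Tendsto (fun t : ℝ => t * r + (1 - t) * r') (𝓝[<] 1) (𝓝 r) := by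
    apply tendsto_nhdsWithin_of_tendsto_nhds
    convert (show Continuous fun t : ℝ => t * r + (1 - t) * r' by fun_prop).tendsto 1 using 2
    ring
  exact (Eventually.and (Ioo_mem_nhdsLT one_pos) (hcont.eventually (gt_mem_nhds hrμ))).exists

lemma iInf_le_liminf_iInf {s : Set ℝ} (hs : IsCompact s) (hsc : Convex ℝ s) {f : ℝ → EReal}
    {F : ℕ → ℝ → EReal} (hF : ∀ n, Convex ℝ (realEpigraph s (F n)))
    (hlim : ∀ x ∈ s, Tendsto (F · x) atTop (𝓝 (f x))) (hdom : {x ∈ s | f x ≠ ⊤}.Nontrivial) :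
    ⨅ x ∈ s, f x ≤ liminf (fun n => ⨅ x ∈ s, F n x) atTop := by
  by_contra! h
  obtain ⟨r, hr_lt, hr⟩ := EReal.exists_between_coe_real h
  obtain ⟨μ, hrμ, hμ⟩ := EReal.exists_between_coe_real hr
  obtain ⟨φ, hφ, z, hz, y, hy, hzy⟩ := exists_seq_tendsto_of_liminf_iInf_lt hs hr_lt
  obtain ⟨p, ⟨hp, hfp⟩, hpy⟩ := hdom.exists_ne y
  obtain ⟨r', hfr', -⟩ := EReal.exists_between_coe_real (lt_top_iff_ne_top.2 hfp)
  have hlimφ : ∀ x ∈ s, Tendsto (fun k => F (φ k) x) atTop (𝓝 (f x)) :=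
    fun x hx => (hlim x hx).comp hφ.tendsto_atTop
  obtain ⟨t, ht, htμ⟩ := exists_mem_Ioo_mul_add_one_sub_mul_lt (EReal.coe_lt_coe_iff.1 hrμ) r'
  have hx : p + t * (y - p) ∈ s := hsc.add_smul_sub_mem hp hy ⟨ht.1.le, ht.2.le⟩
  have hFp : ∀ᶠ k in atTop, F (φ k) p ≤ r' :=
    ((hlimφ p hp).eventually (gt_mem_nhds hfr')).mono fun _ => le_of_lt
  have hupper := eventually_lt_of_convex_realEpigraph (fun k => hF (φ k)) (fun k => (hz k).1)
    (fun k => (hz k).2.le) hzy hp hpy hFp ht htμ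
  have hlower := (hlimφ _ hx).eventually (lt_mem_nhds (hμ.trans_le (iInf₂_le _ hx)))
  obtain ⟨k, hk_upper, hk_lower⟩ := (hupper.and hlower).exists
  exact lt_asymm hk_upper hk_lower

lemma EReal.exists_seq_coe_tendsto (z : EReal) :
    ∃ y : ℕ → ℝ, Tendsto (fun n => (y n : EReal)) atTop (𝓝 z) := by
  induction z using EReal.rec with
  | bot => exact ⟨fun n => -n, EReal.tendsto_coe_nhds_bot_iff.2 <|
      tendsto_neg_atTop_atBot.comp tendsto_natCast_atTop_atTop⟩
  | coe x => exact ⟨fun _ => x, tendsto_const_nhds⟩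
  | top => exact ⟨fun n => n, EReal.tendsto_coe_nhds_top_iff.2 tendsto_natCast_atTop_atTop⟩

lemma Convex.exists_seq_ne_tendsto {E : Type*} [NormedAddCommGroup E] [NormedSpace ℝ E]
    {s : Set E} (hs : Convex ℝ s) (hnt : s.Nontrivial) {x : E} (hx : x ∈ s) :
    ∃ w : ℕ → E, (∀ n, w n ∈ s ∧ w n ≠ x) ∧ Tendsto w atTop (𝓝 x) := by
  obtain ⟨e, he, hex⟩ := hnt.exists_ne x
  refine ⟨fun n => x + (1 / ((n : ℝ) + 1)) • (e - x), fun n => ⟨?_, ?_⟩, ?_⟩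
  · refine hs.add_smul_sub_mem hx he ⟨by positivity, ?_⟩
    exact div_le_one_of_le₀ (by simp) (by positivity)
  · simp [sub_eq_zero, hex, Nat.cast_add_one_ne_zero]
  · simpa using ((tendsto_one_div_add_atTop_nhds_zero_nat (𝕜 := ℝ)).smul_const (e - x)).const_add x

lemma exists_forall_ne_eq_top_of_subsingleton {X α : Type*} [Top α] {s : Set X}
    (hs : s.Nonempty) {f : X → α} (h : {x ∈ s | f x ≠ ⊤}.Subsingleton) :
    ∃ x₀ ∈ s, ∀ x ∈ s, x ≠ x₀ → f x = ⊤ := by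
  rcases {x ∈ s | f x ≠ ⊤}.eq_empty_or_nonempty with hempty | ⟨x₀, hx₀, hfx₀⟩
  · obtain ⟨x₀, hx₀⟩ := hs
    exact ⟨x₀, hx₀, fun x hx _ => by_contra fun hfx => hempty.subset ⟨hx, hfx⟩⟩
  · exact ⟨x₀, hx₀, fun x hx hne => by_contra fun hfx => hne (h ⟨hx, hfx⟩ ⟨hx₀, hfx₀⟩)⟩

open Classical in
lemma exists_not_tendsto_iInf {s : Set ℝ} (hs : Convex ℝ s) (hnt : s.Nontrivial)
    {f : ℝ → EReal} {x₀ : ℝ} (hx₀ : x₀ ∈ s) (htop : ∀ x ∈ s, x ≠ x₀ → f x = ⊤)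
    (hbot : f x₀ ≠ ⊥) :
    ∃ F : ℕ → ℝ → EReal, (∀ n, Convex ℝ (realEpigraph s (F n))) ∧
      (∀ x ∈ s, Tendsto (F · x) atTop (𝓝 (f x))) ∧
      ¬ Tendsto (fun n => ⨅ x ∈ s, F n x) atTop (𝓝 (⨅ x ∈ s, f x)) := by
  obtain ⟨w, hw, hwx₀⟩ := hs.exists_seq_ne_tendsto hnt hx₀
  obtain ⟨y, hy⟩ := EReal.exists_seq_coe_tendsto (f x₀)
  obtain ⟨d, -, hd⟩ := EReal.exists_between_coe_real (bot_lt_iff_ne_bot.2 hbot)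
  set g : ℕ → ℝ → ℝ := fun n x => y n + (d - y n) / (w n - x₀) * (x - x₀)
  set F : ℕ → ℝ → EReal := fun n x => if x ∈ uIcc x₀ (w n) then (g n x : EReal) else ⊤
  have hinf : ⨅ x ∈ s, f x = f x₀ :=
    le_antisymm (iInf₂_le x₀ hx₀) <| le_iInf₂ fun x hx => by
      rcases eq_or_ne x x₀ with rfl | hne
      · rfl
      · simp [htop x hx hne]
  refine ⟨F, fun n => ?_, fun x hx => ?_, fun h => ?_⟩
  · exact (convexOn_add_mul_sub (convex_uIcc _ _) _ _ _).convex_realEpigraph_ite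
      (hs.ordConnected.uIcc_subset hx₀ (hw n).1)
  · rcases eq_or_ne x x₀ with rfl | hne
    · simpa [F, g] using hy
    · rw [htop x hx hne]
      have hfar : ∀ᶠ n in atTop, |w n - x₀| < |x - x₀| := by
        simpa [Real.dist_eq] using Metric.tendsto_nhds.1 hwx₀ _ (abs_pos.2 (sub_ne_zero.2 hne))
      refine tendsto_const_nhds.congr' (hfar.mono fun n hn => ?_)
      have hxn : x ∉ uIcc x₀ (w n) := fun hmem => (abs_sub_left_of_mem_uIcc hmem).not_gt hn
      simp [F, hxn]
  · rw [hinf] at h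
    obtain ⟨n, hn⟩ := (h.eventually (lt_mem_nhds hd)).exists
    have hwn : F n (w n) = d := by
      have : g n (w n) = d := by
        simp only [g]; field_simp [sub_ne_zero.2 (hw n).2]; ring
      simp [F, this]
    exact (hn.trans_le ((iInf₂_le (w n) (hw n).1).trans hwn.le)).false

theorem stmt_9_general (a b : ℝ) (hab : a < b) (f : ℝ → EReal) :
    (∀ F : ℕ → ℝ → EReal,
        (∀ n, Convex ℝ {p : ℝ × ℝ | p.1 ∈ Set.Icc a b ∧ F n p.1 ≤ (p.2 : EReal)}) →
        (∀ x ∈ Set.Icc a b, Filter.Tendsto (fun n => F n x) Filter.atTop (nhds (f x))) →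
        Filter.Tendsto (fun n => ⨅ x ∈ Set.Icc a b, F n x) Filter.atTop
          (nhds (⨅ x ∈ Set.Icc a b, f x)))
      ↔
    ({x ∈ Set.Icc a b | f x ≠ ⊤}.Nontrivial ∨ (⨅ x ∈ Set.Icc a b, f x) = ⊥) := by
  constructor
  · intro hstable
    by_contra! h
    obtain ⟨x₀, hx₀, htop⟩ :=
      exists_forall_ne_eq_top_of_subsingleton (nonempty_Icc.2 hab.le) h.1
    have hbot : f x₀ ≠ ⊥ := fun hfx₀ => h.2 (le_bot_iff.1 (hfx₀ ▸ iInf₂_le x₀ hx₀))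
    have hIcc : (Icc a b).Nontrivial :=
      ⟨a, left_mem_Icc.2 hab.le, b, right_mem_Icc.2 hab.le, hab.ne⟩
    obtain ⟨F, hF, hlim, hnot⟩ := exists_not_tendsto_iInf (convex_Icc a b) hIcc hx₀ htop hbot
    exact hnot (hstable F hF hlim)
  · intro h F hF hlim
    refine tendsto_of_le_liminf_of_limsup_le ?_ (limsup_iInf_le hlim)
    rcases h with hdom | hbot
    · exact iInf_le_liminf_iInf isCompact_Icc (convex_Icc a b) hF hlim hdom
    · exact hbot ▸ bot_le

/-- For `C = [a,b]` with `a < b` and convex `f : C → [−∞,∞]`, `f` is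
infimum-stable iff its effective domain has more than one point or
`inf_C f = −∞`. -/
theorem stmt_9 (a b : ℝ) (hab : a < b) (f : ℝ → EReal)
    (hf : Convex ℝ {p : ℝ × ℝ | p.1 ∈ Set.Icc a b ∧ f p.1 ≤ (p.2 : EReal)}) :
    (∀ F : ℕ → ℝ → EReal,
        (∀ n, Convex ℝ {p : ℝ × ℝ | p.1 ∈ Set.Icc a b ∧ F n p.1 ≤ (p.2 : EReal)}) →
        (∀ x ∈ Set.Icc a b, Filter.Tendsto (fun n => F n x) Filter.atTop (nhds (f x))) →
        Filter.Tendsto (fun n => ⨅ x ∈ Set.Icc a b, F n x) Filter.atTop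
          (nhds (⨅ x ∈ Set.Icc a b, f x)))
      ↔
    ({x ∈ Set.Icc a b | f x ≠ ⊤}.Nontrivial ∨ (⨅ x ∈ Set.Icc a b, f x) = ⊥) :=
  stmt_9_general a b hab f
end

section
/- Let C be a bounded convex subset of ℝ with more than one point, and let f : C → (−∞, ∞] be convex. Then f is infimum-stable if and only if dom f has more than one point. -/
/-!
Pointwise convergence alone already gives `limsup inf F_n ≤ inf f`. When `dom f` holds two
points the infima cannot drop in the limit either: points where `F_n < v` accumulate at some
`c ∈ closure C`, and convexity along the chords from them to a point `y ≠ c` of `dom f` bounds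
`F_n` at the fixed point `z = c + δ (y - c) ∈ C` by `(1 - δ) v + δ β`, where `β > f y`; for small
`δ` this is `< inf f ≤ f z`, against `F_n z → f z`. When `dom f ⊆ {a}`, V-shaped functions with value tending to `f a` at `a`, vertex
value tending to `-∞` at `a + (b - a) / n²` and slopes `n³ / |b - a|` converge pointwise to `f`
while their infima tend to `⊥ ≠ f a`.
-/

open Filter Topology Set

def epigraphOn {E : Type*} (C : Set E) (F : E → EReal) : Set (E × ℝ) :=
  {p | p.1 ∈ C ∧ F p.1 ≤ (p.2 : EReal)}

def IsInfStable (C : Set ℝ) (f : ℝ → EReal) : Prop :=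
  ∀ F : ℕ → ℝ → EReal, (∀ n, Convex ℝ (epigraphOn C (F n))) →
    (∀ x ∈ C, Tendsto (fun n => F n x) atTop (𝓝 (f x))) →
    Tendsto (fun n => ⨅ x ∈ C, F n x) atTop (𝓝 (⨅ x ∈ C, f x))

lemma ConvexOn.convex_epigraphOn_coe {E : Type*} [AddCommGroup E] [Module ℝ E] {C : Set E}
    {g : E → ℝ} (hg : ConvexOn ℝ C g) : Convex ℝ (epigraphOn C fun x => (g x : EReal)) := by
  simpa only [epigraphOn, EReal.coe_le_coe_iff] using hg.convex_epigraph

lemma Convex.apply_combo_le_of_epigraphOn {C : Set ℝ} {F : ℝ → EReal}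
    (hF : Convex ℝ (epigraphOn C F)) {x y t α β : ℝ} (hx : x ∈ C) (hy : y ∈ C)
    (hxα : F x ≤ α) (hyβ : F y ≤ β) (ht : t ∈ Icc (0 : ℝ) 1) :
    F ((1 - t) * x + t * y) ≤ ((1 - t) * α + t * β : ℝ) := by
  have hxα' : (x, α) ∈ epigraphOn C F := ⟨hx, hxα⟩
  have hyβ' : (y, β) ∈ epigraphOn C F := ⟨hy, hyβ⟩
  simpa using (hF hxα' hyβ' (sub_nonneg.2 ht.2) ht.1 (by ring)).2

lemma eventually_combo_eq {ι : Type*} {l : Filter ι} {x : ι → ℝ} {c y δ : ℝ}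
    (hx : Tendsto x l (𝓝 c)) (hyc : y ≠ c) (hδ : δ ∈ Ioo (0 : ℝ) 1) :
    ∃ t : ι → ℝ, Tendsto t l (𝓝 δ) ∧
      ∀ᶠ i in l, t i ∈ Icc (0 : ℝ) 1 ∧ (1 - t i) * x i + t i * y = c + δ * (y - c) := by
  have hyc' : y - c ≠ 0 := sub_ne_zero.2 hyc
  have hden : Tendsto (fun i => y - x i) l (𝓝 (y - c)) := tendsto_const_nhds.sub hx
  have ht : Tendsto (fun i => (c + δ * (y - c) - x i) / (y - x i)) l (𝓝 δ) := by
    have hlim : (c + δ * (y - c) - c) / (y - c) = δ := by field_simp; ring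
    have := ((tendsto_const_nhds (x := c + δ * (y - c))).sub hx).div hden hyc'
    rwa [hlim] at this
  refine ⟨_, ht, ?_⟩
  filter_upwards [ht.eventually (Ioo_mem_nhds hδ.1 hδ.2), hden.eventually_ne hyc']
    with i hti hi
  refine ⟨Ioo_subset_Icc_self hti, ?_⟩
  field_simp
  ring

lemma Convex.add_mul_sub_mem_of_mem_closure {C : Set ℝ} (hC : Convex ℝ C) {c y δ : ℝ}
    (hc : c ∈ closure C) (hy : y ∈ C) (hyc : y ≠ c) (hδ : δ ∈ Ioo (0 : ℝ) 1) :
    c + δ * (y - c) ∈ C := by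
  obtain ⟨x, hxC, hx⟩ := mem_closure_iff_seq_limit.1 hc
  obtain ⟨t, -, ht⟩ := eventually_combo_eq hx hyc hδ
  obtain ⟨n, ht01, hn⟩ := ht.exists
  rw [← hn]
  simpa using hC (hxC n) hy (sub_nonneg.2 ht01.2) ht01.1 (by ring)

lemma le_of_tendsto_of_convex_epigraphOn {ι : Type*} {l : Filter ι} [l.NeBot] {C : Set ℝ}
    {G : ι → ℝ → EReal} (hG : ∀ i, Convex ℝ (epigraphOn C (G i))) {x : ι → ℝ}
    (hxC : ∀ i, x i ∈ C) {c : ℝ} (hx : Tendsto x l (𝓝 c)) {α : ℝ} (hxα : ∀ i, G i (x i) ≤ α)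
    {y β : ℝ} (hy : y ∈ C) (hyc : y ≠ c) (hyβ : ∀ᶠ i in l, G i y ≤ β) {δ : ℝ}
    (hδ : δ ∈ Ioo (0 : ℝ) 1) {L : EReal}
    (hL : Tendsto (fun i => G i (c + δ * (y - c))) l (𝓝 L)) :
    L ≤ ((1 - δ) * α + δ * β : ℝ) := by
  obtain ⟨t, ht, hcombo⟩ := eventually_combo_eq hx hyc hδ
  have hbound : Tendsto (fun i => (((1 - t i) * α + t i * β : ℝ) : EReal)) l
      (𝓝 ((1 - δ) * α + δ * β : ℝ)) :=
    (continuous_coe_real_ereal.tendsto _).comp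
      (((tendsto_const_nhds.sub ht).mul tendsto_const_nhds).add (ht.mul tendsto_const_nhds))
  refine le_of_tendsto_of_tendsto hL hbound ?_
  filter_upwards [hcombo, hyβ] with i ⟨hti, hz⟩ hyi
  rw [← hz]
  exact (hG i).apply_combo_le_of_epigraphOn (hxC i) hy (hxα i) hyi hti

lemma exists_mem_Ioo_combo_lt {v w β : ℝ} (hvw : v < w) :
    ∃ δ ∈ Ioo (0 : ℝ) 1, (1 - δ) * v + δ * β < w := by
  have hcont : Continuous fun δ : ℝ => (1 - δ) * v + δ * β := by fun_prop
  have hlim : Tendsto (fun δ : ℝ => (1 - δ) * v + δ * β) (𝓝[>] 0) (𝓝 v) := by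
    simpa using (hcont.tendsto 0).mono_left nhdsWithin_le_nhds
  obtain ⟨δ, hδw, hδ⟩ :=
    ((hlim.eventually (gt_mem_nhds hvw)).and (Ioo_mem_nhdsGT one_pos)).exists
  exact ⟨δ, hδ, hδw⟩

lemma eventually_le_of_nontrivial_dom {C : Set ℝ} (hC : Convex ℝ C)
    (hCb : Bornology.IsBounded C) {f : ℝ → EReal} (hdom : {x ∈ C | f x ≠ ⊤}.Nontrivial)
    {F : ℕ → ℝ → EReal} (hF : ∀ n, Convex ℝ (epigraphOn C (F n)))
    (hFf : ∀ x ∈ C, Tendsto (fun n => F n x) atTop (𝓝 (f x)))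
    {v w : ℝ} (hvw : v < w) (hw : ∀ x ∈ C, (w : EReal) ≤ f x) :
    ∀ᶠ n in atTop, ∀ x ∈ C, (v : EReal) ≤ F n x := by
  by_contra hbad
  simp only [not_eventually, not_forall, not_le] at hbad
  obtain ⟨φ, hφ, hφbad⟩ := extraction_of_frequently_atTop hbad
  choose x hxC hxv using hφbad
  obtain ⟨c, hc, ψ, hψ, hxψ⟩ := tendsto_subseq_of_bounded hCb hxC
  obtain ⟨y, ⟨hyC, hyT⟩, hyc⟩ := hdom.exists_ne c
  obtain ⟨β, hyβ, -⟩ := EReal.exists_between_coe_real (lt_top_iff_ne_top.2 hyT)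
  obtain ⟨δ, hδ, hδw⟩ := exists_mem_Ioo_combo_lt (β := β) hvw
  have hz := hC.add_mul_sub_mem_of_mem_closure hc hyC hyc hδ
  have hsub : Tendsto (φ ∘ ψ) atTop atTop := hφ.tendsto_atTop.comp hψ.tendsto_atTop
  have hfz := le_of_tendsto_of_convex_epigraphOn (G := fun k => F (φ (ψ k))) (fun _ => hF _)
    (fun k => hxC (ψ k)) hxψ (fun k => (hxv (ψ k)).le) hyC hyc
    (hsub.eventually ((hFf y hyC).eventually_lt_const hyβ) |>.mono fun _ => le_of_lt) hδ
    ((hFf _ hz).comp hsub)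
  exact (hw _ hz).trans hfz |>.not_gt (EReal.coe_lt_coe_iff.2 hδw)

lemma eventually_biInf_lt_of_tendsto {α ι β : Type*} [CompleteLinearOrder β]
    [TopologicalSpace β] [OrderTopology β] {l : Filter ι} {C : Set α} {F : ι → α → β} {f : α → β}
    (hF : ∀ x ∈ C, Tendsto (fun i => F i x) l (𝓝 (f x))) {u : β} (hu : ⨅ x ∈ C, f x < u) :
    ∀ᶠ i in l, ⨅ x ∈ C, F i x < u := by
  obtain ⟨x, hxC, hxu⟩ : ∃ x ∈ C, f x < u := by
    simpa only [iInf_lt_iff, exists_prop] using hu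
  filter_upwards [(hF x hxC).eventually_lt_const hxu] with i hi
  exact (iInf₂_le x hxC).trans_lt hi

theorem isInfStable_of_nontrivial_dom {C : Set ℝ} (hC : Convex ℝ C)
    (hCb : Bornology.IsBounded C) {f : ℝ → EReal} (hdom : {x ∈ C | f x ≠ ⊤}.Nontrivial) :
    IsInfStable C f := by
  intro F hF hFf
  refine tendsto_order.2 ⟨fun u hu => ?_, fun u hu => eventually_biInf_lt_of_tendsto hFf hu⟩
  obtain ⟨v, huv, hv⟩ := EReal.exists_between_coe_real hu
  obtain ⟨w, hvw, hw⟩ := EReal.exists_between_coe_real hv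
  have hwf : ∀ x ∈ C, (w : EReal) ≤ f x := fun x hx => hw.le.trans (iInf₂_le x hx)
  filter_upwards [eventually_le_of_nontrivial_dom hC hCb hdom hF hFf
    (EReal.coe_lt_coe_iff.1 hvw) hwf] with n hn
  exact huv.trans_le (le_iInf₂ hn)

noncomputable def vShape (a d s : ℝ) (n : ℕ) (x : ℝ) : ℝ :=
  s - n + n ^ 3 / |d| * |x - (a + d / n ^ 2)|

section vShape

variable {a d s : ℝ} {n : ℕ}

lemma vShape_self (hd : d ≠ 0) : vShape a d s n a = s := by
  rcases eq_or_ne n 0 with rfl | hn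
  · simp [vShape]
  · have hd' : |d| ≠ 0 := abs_ne_zero.2 hd
    simp only [vShape, sub_add_cancel_left, abs_neg, abs_div, abs_pow, Nat.abs_cast]
    field_simp
    ring

lemma vShape_vertex : vShape a d s n (a + d / n ^ 2) = s - n := by
  simp [vShape]

lemma convexOn_vShape : ConvexOn ℝ univ (vShape a d s n) := by
  have hdist :
      vShape a d s n = fun x => s - n + ((n : ℝ) ^ 3 / |d|) • dist x (a + d / n ^ 2) := by
    funext x
    rw [vShape, smul_eq_mul, Real.dist_eq]
  rw [hdist]
  exact (convexOn_const _ convex_univ).add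
    ((convexOn_univ_dist _).smul (by positivity))

lemma sub_two_mul_add_le_vShape (hd : d ≠ 0) (x : ℝ) :
    s - 2 * n + n ^ 3 * (|x - a| / |d|) ≤ vShape a d s n x := by
  rcases eq_or_ne n 0 with rfl | hn
  · simp [vShape]
  have hn2 : (0 : ℝ) < (n : ℝ) ^ 2 := by positivity
  have hd' : 0 < |d| := abs_pos.2 hd
  have htri : |x - a| ≤ |x - (a + d / n ^ 2)| + |d| / n ^ 2 := by
    calc |x - a| = |(x - (a + d / n ^ 2)) + d / n ^ 2| := by ring_nf
      _ ≤ |x - (a + d / n ^ 2)| + |d / n ^ 2| := abs_add_le _ _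
      _ = |x - (a + d / n ^ 2)| + |d| / n ^ 2 := by rw [abs_div, abs_of_pos hn2]
  have hscaled : (n : ℝ) ^ 3 * (|x - a| / |d|) ≤ n ^ 3 / |d| * |x - (a + d / n ^ 2)| + n := by
    calc (n : ℝ) ^ 3 * (|x - a| / |d|) = n ^ 3 / |d| * |x - a| := by ring
      _ ≤ n ^ 3 / |d| * (|x - (a + d / n ^ 2)| + |d| / n ^ 2) := by gcongr
      _ = n ^ 3 / |d| * |x - (a + d / n ^ 2)| + n := by field_simp
  rw [vShape]
  linarith

lemma tendsto_vShape_atTop {s : ℕ → ℝ} (hs : BddBelow (range s)) (hd : d ≠ 0) {x : ℝ}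
    (hx : x ≠ a) : Tendsto (fun n => vShape a d (s n) n x) atTop atTop := by
  obtain ⟨m, hm⟩ := hs
  have hc : 0 < |x - a| / |d| := by positivity
  have hcub :
      Tendsto (fun n : ℕ => m + (n : ℝ) * (|x - a| / |d| * (n : ℝ) ^ 2 - 2)) atTop atTop :=
    tendsto_atTop_add_const_left _ _ <| tendsto_natCast_atTop_atTop.atTop_mul_atTop₀ <|
      tendsto_atTop_add_const_right _ _ <| ((tendsto_pow_atTop two_ne_zero).comp
        tendsto_natCast_atTop_atTop).const_mul_atTop hc
  refine tendsto_atTop_mono (fun n => ?_) hcub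
  have hlower := sub_two_mul_add_le_vShape (a := a) (s := s n) (n := n) hd x
  have hsn := hm (mem_range_self n)
  nlinarith

end vShape

lemma exists_tendsto_sub_natCast_atBot {e : EReal} (he : e ≠ ⊥) :
    ∃ s : ℕ → ℝ, BddBelow (range s) ∧ Tendsto (fun n => (s n : EReal)) atTop (𝓝 e) ∧
      Tendsto (fun n => s n - n) atTop atBot := by
  induction e using EReal.rec with
  | bot => exact absurd rfl he
  | coe r =>
    refine ⟨fun _ => r, ⟨r, by rintro _ ⟨n, rfl⟩; rfl⟩, tendsto_const_nhds, ?_⟩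
    simpa [sub_eq_add_neg] using
      tendsto_atBot_add_const_left _ r (tendsto_neg_atTop_atBot.comp tendsto_natCast_atTop_atTop)
  | top =>
    have hhalf : Tendsto (fun n : ℕ => (n : ℝ) / 2) atTop atTop :=
      tendsto_natCast_atTop_atTop.atTop_div_const two_pos
    refine ⟨fun n => n / 2, ⟨0, by rintro _ ⟨n, rfl⟩; positivity⟩,
      EReal.tendsto_coe_nhds_top_iff.2 hhalf, ?_⟩
    exact (tendsto_neg_atTop_atBot.comp hhalf).congr fun n => by
      simp only [Function.comp_apply]; ring

theorem not_isInfStable_of_subsingleton_dom {C : Set ℝ} (hC : Convex ℝ C)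
    (hCnt : C.Nontrivial) {f : ℝ → EReal} (hfbot : ∀ x ∈ C, f x ≠ ⊥)
    (hdom : {x ∈ C | f x ≠ ⊤}.Subsingleton) :
    ¬ IsInfStable C f := by
  intro hstab
  obtain ⟨a, haC, hfa⟩ : ∃ a ∈ C, ∀ x ∈ C, f x ≠ ⊤ → x = a := by
    rcases {x ∈ C | f x ≠ ⊤}.eq_empty_or_nonempty with h | ⟨a, haC, hfa⟩
    · obtain ⟨a, haC⟩ := hCnt.nonempty
      exact ⟨a, haC, fun x hx hfx => (h.subset ⟨hx, hfx⟩).elim⟩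
    · exact ⟨a, haC, fun x hx hfx => hdom ⟨hx, hfx⟩ ⟨haC, hfa⟩⟩
  obtain ⟨b, hbC, hba⟩ := hCnt.exists_ne a
  have hd : b - a ≠ 0 := sub_ne_zero.2 hba
  obtain ⟨s, hsb, hs, hsn⟩ := exists_tendsto_sub_natCast_atBot (hfbot a haC)
  set F : ℕ → ℝ → EReal := fun n x => vShape a (b - a) (s n) n x
  have hF : ∀ n, Convex ℝ (epigraphOn C (F n)) := fun n =>
    (convexOn_vShape.subset (subset_univ C) hC).convex_epigraphOn_coe
  have hFf : ∀ x ∈ C, Tendsto (fun n => F n x) atTop (𝓝 (f x)) := by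
    intro x hx
    rcases eq_or_ne x a with rfl | hxa
    · simpa only [F, vShape_self hd] using hs
    · rw [not_not.1 (mt (hfa x hx) hxa)]
      exact EReal.tendsto_coe_nhds_top_iff.2 (tendsto_vShape_atTop hsb hd hxa)
  have hinf : ⨅ x ∈ C, f x = f a := by
    refine le_antisymm (iInf₂_le a haC) (le_iInf₂ fun x hx => ?_)
    rcases eq_or_ne (f x) ⊤ with h | h
    · exact h ▸ le_top
    · exact hfa x hx h ▸ le_rfl
  have hvertex (n : ℕ) : a + (b - a) / n ^ 2 ∈ C := by
    rw [div_eq_inv_mul, ← smul_eq_mul]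
    refine hC.add_smul_sub_mem haC hbC ⟨by positivity, ?_⟩
    rcases eq_or_ne n 0 with rfl | hn
    · simp
    · exact inv_le_one_of_one_le₀ (one_le_pow₀ (Nat.one_le_cast.2 (Nat.pos_of_ne_zero hn)))
  have hbot : Tendsto (fun n => ⨅ x ∈ C, F n x) atTop (𝓝 ⊥) :=
    tendsto_nhds_bot_mono' (EReal.tendsto_coe_nhds_bot_iff.2 hsn) fun n =>
      (iInf₂_le _ (hvertex n)).trans_eq (by simp only [F, vShape_vertex])
  exact hfbot a haC (hinf ▸ tendsto_nhds_unique (hstab F hF hFf) hbot)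

theorem stmt_11_general (C : Set ℝ) (hC : Convex ℝ C) (hCb : Bornology.IsBounded C)
    (hCnt : C.Nontrivial) (f : ℝ → EReal)
    (hfbot : ∀ x ∈ C, f x ≠ ⊥) :
    (∀ F : ℕ → ℝ → EReal,
        (∀ n, Convex ℝ {p : ℝ × ℝ | p.1 ∈ C ∧ F n p.1 ≤ (p.2 : EReal)}) →
        (∀ x ∈ C, Filter.Tendsto (fun n => F n x) Filter.atTop (nhds (f x))) →
        Filter.Tendsto (fun n => ⨅ x ∈ C, F n x) Filter.atTop (nhds (⨅ x ∈ C, f x)))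
      ↔ {x ∈ C | f x ≠ ⊤}.Nontrivial :=
  ⟨fun hstab => not_not.1 fun hdom =>
      not_isInfStable_of_subsingleton_dom hC hCnt hfbot (not_nontrivial_iff.1 hdom) hstab,
    isInfStable_of_nontrivial_dom hC hCb⟩

/-- If `C ⊆ ℝ` is bounded, convex and nontrivial, and `f : C → (−∞,∞]` is
convex never taking the value `−∞`, then `f` is infimum-stable iff its
effective domain has more than one point. -/
theorem stmt_11 (C : Set ℝ) (hC : Convex ℝ C) (hCb : Bornology.IsBounded C)
    (hCnt : C.Nontrivial) (f : ℝ → EReal)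
    (hfbot : ∀ x ∈ C, f x ≠ ⊥)
    (hf : Convex ℝ {p : ℝ × ℝ | p.1 ∈ C ∧ f p.1 ≤ (p.2 : EReal)}) :
    (∀ F : ℕ → ℝ → EReal,
        (∀ n, Convex ℝ {p : ℝ × ℝ | p.1 ∈ C ∧ F n p.1 ≤ (p.2 : EReal)}) →
        (∀ x ∈ C, Filter.Tendsto (fun n => F n x) Filter.atTop (nhds (f x))) →
        Filter.Tendsto (fun n => ⨅ x ∈ C, F n x) Filter.atTop (nhds (⨅ x ∈ C, f x)))
      ↔ {x ∈ C | f x ≠ ⊤}.Nontrivial :=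
  stmt_11_general C hC hCb hCnt f hfbot
end

section
/- Define f : ℝ² → (−∞,∞] by f(0,0) = 0 and f(x,y) = ∞ otherwise, and fₙ(x,y) = n·|y + n·x|. Then each fₙ is convex, lower semicontinuous, and proper; fₙ → f pointwise; yet on the compact set K = [−1,0] × {1} ⊆ ℝ² (disjoint from the closure of dom f) one has inf_K fₙ = 0 for all n, so fₙ does not tend to ∞ uniformly on K. -/
/-! `fₙ` vanishes on the line `y = -n x`, which meets `K = [-1, 0] × {1}` at `(-1/n, 1)`, so
`inf_K fₙ = 0` for every `n ≥ 1`. Away from the origin `|y + n x|` stays bounded away from `0`,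
so `fₙ = n |y + n x| → ∞` there, while `fₙ(0, 0) = 0`. -/

open Filter Set

lemma convexOn_mul_abs_snd_add_mul_fst {c : ℝ} (hc : 0 ≤ c) (a : ℝ) :
    ConvexOn ℝ univ fun p : ℝ × ℝ => c * |p.2 + a * p.1| := by
  have h := (convexOn_univ_norm (E := ℝ)).comp_affineMap
    ((LinearMap.snd ℝ ℝ ℝ + a • LinearMap.fst ℝ ℝ ℝ).toAffineMap)
  simpa [Function.comp_def] using h.smul hc

lemma exists_pos_eventually_le_abs_snd_add_mul_fst {p : ℝ × ℝ} (hp : p ≠ 0) :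
    ∃ δ > 0, ∀ᶠ n : ℕ in atTop, δ ≤ |p.2 + n * p.1| := by
  rcases eq_or_ne p.1 0 with h1 | h1
  · have h2 : p.2 ≠ 0 := fun h2 => hp (Prod.ext h1 h2)
    exact ⟨|p.2|, abs_pos.mpr h2, Eventually.of_forall fun n => by simp [h1]⟩
  · refine ⟨1, one_pos, ?_⟩
    filter_upwards [tendsto_natCast_atTop_atTop.eventually_ge_atTop ((1 + |p.2|) / |p.1|)]
      with n hn
    have hn' : 1 + |p.2| ≤ n * |p.1| := (div_le_iff₀ (abs_pos.mpr h1)).mp hn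
    calc (1 : ℝ) ≤ |n * p.1| - |-p.2| := by
          rw [abs_mul, Nat.abs_cast, abs_neg]; linarith
      _ ≤ |n * p.1 - -p.2| := abs_sub_abs_le_abs_sub _ _
      _ = |p.2 + n * p.1| := by rw [sub_neg_eq_add, add_comm]

lemma tendsto_mul_abs_snd_add_mul_fst {p : ℝ × ℝ} (hp : p ≠ 0) :
    Tendsto (fun n : ℕ => (n : ℝ) * |p.2 + n * p.1|) atTop atTop := by
  obtain ⟨δ, hδ, hle⟩ := exists_pos_eventually_le_abs_snd_add_mul_fst hp
  refine tendsto_atTop_mono' atTop ?_ (tendsto_natCast_atTop_atTop.atTop_mul_const hδ)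
  filter_upwards [hle] with n hn
  exact mul_le_mul_of_nonneg_left hn n.cast_nonneg

lemma mem_Icc_prod_one_and_eq_zero {n : ℕ} (hn : 0 < n) :
    ((-1 / n, 1) : ℝ × ℝ) ∈ Icc (-1 : ℝ) 0 ×ˢ ({1} : Set ℝ) ∧
      (n : ℝ) * |(1 : ℝ) + n * (-1 / n)| = 0 := by
  have hn' : (1 : ℝ) ≤ n := Nat.one_le_cast.mpr hn
  refine ⟨⟨⟨?_, ?_⟩, rfl⟩, ?_⟩
  · rw [le_div_iff₀ (by positivity)]; linarith
  · exact div_nonpos_of_nonpos_of_nonneg (by norm_num) n.cast_nonneg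
  · field_simp; simp

lemma setOf_ne_top_eq_singleton {α : Type*} {f : α → EReal} {a : α} (ha : f a ≠ ⊤)
    (hf : ∀ p, p ≠ a → f p = ⊤) : {p | f p ≠ ⊤} = {a} := by
  ext p
  exact ⟨fun h => by_contra fun hpa => h (hf p hpa), fun h => h ▸ ha⟩

/-- Example: `f(0,0) = 0`, `f = ∞` elsewhere; `fₙ(x,y) = n |y + n x|`.
Each `fₙ` is convex and lower semicontinuous (and real-valued, hence proper);
`fₙ → f` pointwise; yet on the compact set `K = [−1,0] × {1}`, disjoint from
the closure of `dom f`, one has `inf_K fₙ = 0` for `n ≥ 1`, so `fₙ` does not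
tend to `∞` uniformly on `K`. -/
theorem stmt_13 (f : ℝ × ℝ → EReal)
    (hf0 : f (0, 0) = 0) (hf : ∀ p : ℝ × ℝ, p ≠ (0, 0) → f p = ⊤)
    (F : ℕ → ℝ × ℝ → ℝ) (hFdef : ∀ n p, F n p = (n : ℝ) * |p.2 + (n : ℝ) * p.1|) :
    (∀ n, ConvexOn ℝ Set.univ (F n)) ∧
    (∀ n, LowerSemicontinuous (F n)) ∧
    (∀ p : ℝ × ℝ, Filter.Tendsto (fun n => ((F n p : EReal))) Filter.atTop (nhds (f p))) ∧
    IsCompact (Set.Icc (-1 : ℝ) 0 ×ˢ ({1} : Set ℝ)) ∧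
    Disjoint (Set.Icc (-1 : ℝ) 0 ×ˢ ({1} : Set ℝ)) (closure {p : ℝ × ℝ | f p ≠ ⊤}) ∧
    (∀ n : ℕ, 0 < n → sInf (F n '' (Set.Icc (-1 : ℝ) 0 ×ˢ ({1} : Set ℝ))) = 0) ∧
    ¬ (∀ M : ℝ, ∀ᶠ n in Filter.atTop,
        ∀ p ∈ Set.Icc (-1 : ℝ) 0 ×ˢ ({1} : Set ℝ), M ≤ F n p) := by
  obtain rfl : F = fun (n : ℕ) (p : ℝ × ℝ) => (n : ℝ) * |p.2 + n * p.1| := funext₂ hFdef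
  refine ⟨fun n => convexOn_mul_abs_snd_add_mul_fst n.cast_nonneg n,
    fun n => Continuous.lowerSemicontinuous (by fun_prop), fun p => ?_,
    isCompact_Icc.prod isCompact_singleton, ?_, fun n hn => ?_, fun h => ?_⟩
  · by_cases hp : p = (0, 0)
    · subst hp; simp [hf0]
    · rw [hf p hp, EReal.tendsto_coe_nhds_top_iff]
      exact tendsto_mul_abs_snd_add_mul_fst hp
  · rw [setOf_ne_top_eq_singleton (by simp [hf0]) hf, closure_singleton,
      disjoint_singleton_right]
    simp
  · obtain ⟨hmem, hzero⟩ := mem_Icc_prod_one_and_eq_zero hn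
    refine IsLeast.csInf_eq ⟨⟨_, hmem, hzero⟩, ?_⟩
    rintro _ ⟨q, -, rfl⟩
    positivity
  · obtain ⟨n, hn, hM⟩ := ((eventually_gt_atTop 0).and (h 1)).exists
    obtain ⟨hmem, hzero⟩ := mem_Icc_prod_one_and_eq_zero hn
    have h1 : (1 : ℝ) ≤ 0 := hzero ▸ hM _ hmem
    norm_num at h1
end

section
/- Let f, fₙ : ℝ → [−∞,∞] be convex with fₙ → f pointwise, suppose m := inf_{ℝ} f ∈ ℝ, and suppose there exist real u < v with f > m + 1 outside [u, v] and f(w) < m + 1 for some w ∈ [u, v]. Then eventually (for all sufficiently large n) inf_{ℝ} fₙ = inf_{[u−1, v+1]} fₙ. -/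
/-!
A function with convex epigraph is quasiconvex, so on `ℝ` its value at a point between `x` and `w`
is at most `max (F x) (F w)`. For large `n`, `Fₙ w < m + 1 < Fₙ (u - 1), Fₙ (v + 1)` by pointwise
convergence; a point `x` outside `[u - 1, v + 1]` with `Fₙ x < Fₙ w` would then force
`Fₙ (u - 1)` or `Fₙ (v + 1)` below `Fₙ w`. Hence every value of `Fₙ` is dominated by one on
`[u - 1, v + 1]`.
-/

open Set Filter

section Epigraph

variable {E : Type*} [AddCommGroup E] [Module ℝ E] {F : E → EReal}

theorem convex_le_coe_of_convex_epigraph (h : Convex ℝ {p : E × ℝ | F p.1 ≤ (p.2 : EReal)})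
    (r : ℝ) : Convex ℝ {x | F x ≤ (r : EReal)} := by
  intro x hx y hy a b ha hb hab
  have := h (show (x, r) ∈ _ from hx) (show (y, r) ∈ _ from hy) ha hb hab
  simpa only [mem_ofPred_eq, Prod.fst_add, Prod.smul_fst, Prod.snd_add, Prod.smul_snd,
    Convex.combo_self hab] using this

theorem quasiconvexOn_univ_of_convex_epigraph
    (h : Convex ℝ {p : E × ℝ | F p.1 ≤ (p.2 : EReal)}) : QuasiconvexOn ℝ univ F := by
  refine convex_univ.quasiconvexOn_of_convex_le fun r => ?_
  have hsub : {x | F x ≤ r} = ⋂ (z : ℝ) (_ : r < z), {x | F x ≤ (z : EReal)} := by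
    ext x
    simpa only [mem_ofPred_eq, mem_iInter] using EReal.le_of_forall_lt_iff_le.symm
  rw [hsub]
  exact convex_iInter₂ fun z _ => convex_le_coe_of_convex_epigraph h z

end Epigraph

theorem QuasiconvexOn.le_max_of_mem_uIcc {β : Type*} [LinearOrder β] {F : ℝ → β}
    (hF : QuasiconvexOn ℝ univ F) {a b c : ℝ} (hb : b ∈ uIcc a c) : F b ≤ max (F a) (F c) := by
  have hconv := hF (max (F a) (F c))
  rw [← segment_eq_uIcc] at hb
  exact (hconv.segment_subset ⟨mem_univ a, le_max_left _ _⟩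
    ⟨mem_univ c, le_max_right _ _⟩ hb).2

theorem QuasiconvexOn.le_of_mem_uIcc_of_lt {β : Type*} [LinearOrder β] {F : ℝ → β}
    (hF : QuasiconvexOn ℝ univ F) {b w x : ℝ} (hb : b ∈ uIcc x w) (hwb : F w < F b) :
    F w ≤ F x := by
  by_contra! hxw
  have := hF.le_max_of_mem_uIcc hb
  rw [max_eq_right hxw.le] at this
  exact this.not_gt hwb

theorem iInf_eq_biInf_of_forall_exists_le {α β : Type*} [CompleteLattice β] {f : α → β}
    {s : Set α} (h : ∀ x, ∃ y ∈ s, f y ≤ f x) : ⨅ x, f x = ⨅ x ∈ s, f x :=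
  le_antisymm (le_iInf₂ fun x _ => iInf_le f x)
    (le_iInf fun x => let ⟨y, hy, hyx⟩ := h x; (iInf₂_le y hy).trans hyx)

theorem stmt_16_general (f : ℝ → EReal) (F : ℕ → ℝ → EReal)
    (hF : ∀ n, Convex ℝ {p : ℝ × ℝ | F n p.1 ≤ (p.2 : EReal)})
    (hconv : ∀ x : ℝ, Filter.Tendsto (fun n => F n x) Filter.atTop (nhds (f x)))
    (m : ℝ)
    (u v : ℝ)
    (hout : ∀ x : ℝ, x ∉ Set.Icc u v → ((m + 1 : ℝ) : EReal) < f x)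
    (hin : ∃ w ∈ Set.Icc u v, f w < ((m + 1 : ℝ) : EReal)) :
    ∀ᶠ n in Filter.atTop,
      (⨅ x : ℝ, F n x) = ⨅ x ∈ Set.Icc (u - 1) (v + 1), F n x := by
  obtain ⟨w, ⟨huw, hwv⟩, hfw⟩ := hin
  have hleft : ((m + 1 : ℝ) : EReal) < f (u - 1) := hout _ fun h => by linarith [h.1]
  have hright : ((m + 1 : ℝ) : EReal) < f (v + 1) := hout _ fun h => by linarith [h.2]
  filter_upwards [(hconv w).eventually_lt_const hfw,
    (hconv (u - 1)).eventually_const_lt hleft, (hconv (v + 1)).eventually_const_lt hright]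
    with n hw hu hv
  have hFn := quasiconvexOn_univ_of_convex_epigraph (hF n)
  refine iInf_eq_biInf_of_forall_exists_le fun x => ?_
  by_cases hx : x ∈ Icc (u - 1) (v + 1)
  · exact ⟨x, hx, le_rfl⟩
  refine ⟨w, ⟨by linarith, by linarith⟩, ?_⟩
  rcases not_and_or.mp hx with hx | hx
  · exact hFn.le_of_mem_uIcc_of_lt (b := u - 1)
      (Icc_subset_uIcc ⟨by linarith [not_le.mp hx], by linarith⟩) (hw.trans hu)
  · exact hFn.le_of_mem_uIcc_of_lt (b := v + 1)
      (Icc_subset_uIcc' ⟨by linarith, by linarith [not_le.mp hx]⟩) (hw.trans hv)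

/-- If `f, fₙ : ℝ → [−∞,∞]` are convex, `fₙ → f` pointwise, `inf f = m ∈ ℝ`,
`f > m + 1` outside `[u,v]`, and `f(w) < m + 1` for some `w ∈ [u,v]`, then
eventually `inf_ℝ fₙ = inf_[u−1,v+1] fₙ`. -/
theorem stmt_16 (f : ℝ → EReal) (F : ℕ → ℝ → EReal)
    (hf : Convex ℝ {p : ℝ × ℝ | f p.1 ≤ (p.2 : EReal)})
    (hF : ∀ n, Convex ℝ {p : ℝ × ℝ | F n p.1 ≤ (p.2 : EReal)})
    (hconv : ∀ x : ℝ, Filter.Tendsto (fun n => F n x) Filter.atTop (nhds (f x)))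
    (m : ℝ) (hm : (⨅ x : ℝ, f x) = (m : EReal))
    (u v : ℝ) (huv : u < v)
    (hout : ∀ x : ℝ, x ∉ Set.Icc u v → ((m + 1 : ℝ) : EReal) < f x)
    (hin : ∃ w ∈ Set.Icc u v, f w < ((m + 1 : ℝ) : EReal)) :
    ∀ᶠ n in Filter.atTop,
      (⨅ x : ℝ, F n x) = ⨅ x ∈ Set.Icc (u - 1) (v + 1), F n x :=
  stmt_16_general f F hF hconv m u v hout hin
end
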